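/- arXiv:1508.05524 — 12 statements merged into one kernel-verified Lean document; each statement's English description precedes it below -/
import Mathlib

section
/- Let G be a finite abelian group of order N and exponent e (the least common multiple of the orders of the elements of G). For 1 ≤ r ≤ N, define D(N, e, r) = {d₁d₂ : d₁ is a positive divisor of N/e, d₂ is a positive divisor of e, and d₁e ≥ r}. Then ρ_G⁻(r) ≤ min over d ∈ D(N, e, r) of d·(2·⌈r/d⌉ − 1). -/
open Pointwise AddSubgroup Finset

universe u

lemma exists_addSubgroup_card_inf_zmultiples_bot (d : ℕ) :
    ∀ (G : Type u) [AddCommGroup G] [Finite G] (g : G),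
      addOrderOf g = AddMonoid.exponent G → d ∣ Nat.card G / AddMonoid.exponent G →
      ∃ H : AddSubgroup G, Nat.card H = d ∧ H ⊓ AddSubgroup.zmultiples g = ⊥ := by
  induction d using Nat.strong_induction_on with
  | _ d ih =>
  intro G _ _ g hg hd
  have hExp : AddMonoid.ExponentExists G := AddMonoid.ExponentExists.of_finite
  set e := AddMonoid.exponent G with he
  have he0 : 0 < e := AddMonoid.exponent_pos.mpr hExp
  have hN0 : 0 < Nat.card G := Nat.card_pos
  have heN : e ∣ Nat.card G := AddGroup.exponent_dvd_nat_card
  have hq0 : 0 < Nat.card G / e := Nat.div_pos (Nat.le_of_dvd hN0 heN) he0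
  have hd0 : 0 < d := Nat.pos_of_dvd_of_pos hd hq0
  rcases eq_or_ne d 1 with rfl | hd1
  · exact ⟨⊥, by simp, bot_inf_eq _⟩
  -- p : the minimal prime factor of d
  set p := d.minFac with hp
  have pp : p.Prime := Nat.minFac_prime hd1
  haveI : Fact p.Prime := ⟨pp⟩
  have hpd : p ∣ d := Nat.minFac_dvd d
  haveI : Fintype G := Fintype.ofFinite G
  -- p divides e
  have hpN : p ∣ Nat.card G := (hpd.trans hd).trans (Nat.div_dvd_of_dvd heN)
  have hpe : p ∣ e := by
    obtain ⟨x, hx⟩ := exists_prime_addOrderOf_dvd_card (G := G) p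
      (by rwa [← Nat.card_eq_fintype_card])
    exact hx ▸ AddMonoid.addOrder_dvd_exponent x
  obtain ⟨e', he'⟩ := hpe
  have he'0 : 0 < e' := by
    rcases Nat.eq_zero_or_pos e' with h | h
    · simp [h] at he'; omega
    · exact h
  -- Cauchy in G ⧸ zmultiples g
  have hcardzg : Nat.card (zmultiples g) = e := (Nat.card_zmultiples g).trans hg
  have hindzg : (zmultiples g).index = Nat.card G / e := by
    have h := (zmultiples g).card_mul_index
    rw [hcardzg] at h
    exact (Nat.div_eq_of_eq_mul_right he0 h.symm).symm
  haveI : Fintype (G ⧸ zmultiples g) := Fintype.ofFinite _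
  have hpQ0 : p ∣ Fintype.card (G ⧸ zmultiples g) := by
    rw [← Nat.card_eq_fintype_card, ← AddSubgroup.index_eq_card, hindzg]
    exact hpd.trans hd
  obtain ⟨bb, hbb⟩ := exists_prime_addOrderOf_dvd_card (G := G ⧸ zmultiples g) p hpQ0
  obtain ⟨b, rfl⟩ := QuotientAddGroup.mk'_surjective (zmultiples g) bb
  -- p • b ∈ zmultiples g
  have hpb : p • b ∈ zmultiples g := by
    rw [← QuotientAddGroup.eq_zero_iff]
    have : p • ((QuotientAddGroup.mk' (zmultiples g)) b) = 0 := by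
      rw [← hbb]; exact addOrderOf_nsmul_eq_zero _
    simpa using this
  obtain ⟨s, hs⟩ := AddSubgroup.mem_zmultiples_iff.mp hpb
  -- p ∣ s
  have heb : (e : ℤ) • b = 0 := by
    rw [natCast_zsmul]
    exact addOrderOf_dvd_iff_nsmul_eq_zero.mp (AddMonoid.addOrder_dvd_exponent b)
  have hps : (p : ℤ) ∣ s := by
    have h1 : ((e' : ℤ) * s) • g = 0 := by
      rw [mul_smul, hs, ← natCast_zsmul b p, ← mul_smul,
        show (e' : ℤ) * (p : ℤ) = (e : ℤ) by push_cast [he']; ring]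
      exact heb
    have h2 : (e : ℤ) ∣ (e' : ℤ) * s := by
      rw [← hg]; exact addOrderOf_dvd_iff_zsmul_eq_zero.mpr h1
    rw [he'] at h2
    push_cast at h2
    rw [mul_comm (p : ℤ) _] at h2
    exact (mul_dvd_mul_iff_left (by exact_mod_cast he'0.ne' : (e' : ℤ) ≠ 0)).mp h2
  obtain ⟨t, rfl⟩ := hps
  -- the element a of order p with ⟨a⟩ ⊓ ⟨g⟩ = ⊥
  set a := b - t • g with ha
  have hpa : (p : ℕ) • a = 0 := by
    rw [← natCast_zsmul a p, ha, smul_sub, smul_smul, hs, natCast_zsmul b p, sub_self]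
  have hanotin : a ∉ zmultiples g := by
    intro hmem
    have hbmem : b ∈ zmultiples g := by
      have : b = a + t • g := by rw [ha]; abel
      rw [this]
      exact add_mem hmem (zsmul_mem (mem_zmultiples g) t)
    have : (QuotientAddGroup.mk' (zmultiples g)) b = 0 :=
      (QuotientAddGroup.eq_zero_iff b).mpr hbmem
    rw [this, addOrderOf_zero] at hbb
    exact pp.one_lt.ne' hbb.symm
  have ha0 : a ≠ 0 := fun h => hanotin (h ▸ zero_mem _)
  have horda : addOrderOf a = p := addOrderOf_eq_prime hpa ha0
  have hAg : zmultiples a ⊓ zmultiples g = ⊥ := by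
    rw [eq_bot_iff]
    intro x hx
    obtain ⟨hxA, hxg⟩ := AddSubgroup.mem_inf.mp hx
    obtain ⟨m, rfl⟩ := AddSubgroup.mem_zmultiples_iff.mp hxA
    have hpa' : (p : ℤ) • a = 0 := by rw [natCast_zsmul a p, hpa]
    by_cases hpm : (p : ℤ) ∣ m
    · obtain ⟨c, rfl⟩ := hpm
      have h0 : ((p:ℤ) * c) • a = 0 := by rw [mul_comm, mul_smul, hpa', smul_zero]
      rw [AddSubgroup.mem_bot]
      exact h0
    · exfalso
      have hcop : IsCoprime (p : ℤ) m :=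
        (Nat.prime_iff_prime_int.mp pp).coprime_iff_not_dvd.mpr hpm
      obtain ⟨u, v, huv⟩ := hcop
      have h1 : a = v • (m • a) + u • ((p:ℤ) • a) := by
        rw [smul_smul, smul_smul, ← add_smul,
          show v * m + u * (p:ℤ) = u * p + v * m by ring, huv, one_smul]
      have : a ∈ zmultiples g := by
        rw [h1, hpa', smul_zero, add_zero]
        exact zsmul_mem hxg v
      exact hanotin this
  -- pass to the quotient G ⧸ zmultiples a
  set A := zmultiples a with hA
  set π := QuotientAddGroup.mk' A with hπ
  set Q := G ⧸ A with hQ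
  have hcardA : Nat.card A = p := (Nat.card_zmultiples a).trans horda
  have hsurj : Function.Surjective π := QuotientAddGroup.mk'_surjective A
  have hordg' : addOrderOf (π g) = addOrderOf g := by
    rw [addOrderOf_eq_addOrderOf_iff]
    intro n
    constructor
    · intro hn
      have h1 : π (n • g) = 0 := by rw [map_nsmul]; exact hn
      have hmem : n • g ∈ A := (QuotientAddGroup.eq_zero_iff _).mp h1
      have h2 : n • g ∈ A ⊓ zmultiples g :=
        AddSubgroup.mem_inf.mpr ⟨hmem, nsmul_mem (mem_zmultiples g) n⟩
      rw [hAg] at h2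
      exact AddSubgroup.mem_bot.mp h2
    · intro hn
      rw [← map_nsmul, hn, map_zero]
  have hexpQ : AddMonoid.exponent Q = e := by
    apply Nat.dvd_antisymm (AddMonoidHom.exponent_dvd hsurj)
    have h7 := AddMonoid.addOrder_dvd_exponent (π g)
    rwa [hordg', hg] at h7
  have hordexp : addOrderOf (π g) = AddMonoid.exponent Q := by rw [hordg', hg, hexpQ]
  have hcardQ : p * Nat.card Q = Nat.card G := by
    have h := A.card_mul_index
    rw [hcardA, AddSubgroup.index_eq_card] at h
    exact h
  set d' := d / p with hd'
  have hdpd' : d = p * d' := (Nat.mul_div_cancel' hpd).symm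
  have hd'lt : d' < d := Nat.div_lt_self hd0 pp.one_lt
  obtain ⟨cnum, hc⟩ := hd
  have hcardQe : Nat.card Q / e = d' * cnum := by
    have hNcard : Nat.card G = d * cnum * e := by
      rw [← hc]; exact (Nat.div_mul_cancel heN).symm
    have h3 : p * Nat.card Q = p * (d' * cnum * e) := by
      rw [hcardQ, hNcard, hdpd']; ring
    have h2 : Nat.card Q = d' * cnum * e := Nat.eq_of_mul_eq_mul_left pp.pos h3
    rw [h2, Nat.mul_div_cancel _ he0]
  have hd'dvd : d' ∣ Nat.card Q / AddMonoid.exponent Q := by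
    rw [hexpQ, hcardQe]; exact Dvd.intro cnum rfl
  obtain ⟨Hbar, hHc, hHi⟩ := ih d' hd'lt Q (π g) hordexp hd'dvd
  refine ⟨AddSubgroup.comap π Hbar, ?_, ?_⟩
  · -- cardinality
    have h1 := (AddSubgroup.comap π Hbar).card_mul_index
    rw [AddSubgroup.index_comap_of_surjective _ hsurj] at h1
    have h2 := Hbar.card_mul_index
    rw [hHc] at h2
    have hind0 : Hbar.index ≠ 0 := AddSubgroup.index_ne_zero_of_finite
    have h4 : Nat.card (AddSubgroup.comap π Hbar) * Hbar.index = (p * d') * Hbar.index := by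
      rw [h1, ← hcardQ, ← h2]; ring
    have h5 := Nat.eq_of_mul_eq_mul_right (Nat.pos_of_ne_zero hind0) h4
    rw [h5, ← hdpd']
  · rw [eq_bot_iff]
    intro x hx
    obtain ⟨hxH, hxg⟩ := AddSubgroup.mem_inf.mp hx
    obtain ⟨m, rfl⟩ := AddSubgroup.mem_zmultiples_iff.mp hxg
    have hπx : π (m • g) ∈ Hbar ⊓ zmultiples (π g) := by
      refine AddSubgroup.mem_inf.mpr ⟨AddSubgroup.mem_comap.mp hxH, ?_⟩
      rw [map_zsmul]
      exact zsmul_mem (mem_zmultiples _) m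
    rw [hHi, AddSubgroup.mem_bot] at hπx
    have hmemA : m • g ∈ A := (QuotientAddGroup.eq_zero_iff _).mp hπx
    have h6 : m • g ∈ A ⊓ zmultiples g :=
      AddSubgroup.mem_inf.mpr ⟨hmemA, zsmul_mem (mem_zmultiples g) m⟩
    rw [hAg, AddSubgroup.mem_bot] at h6
    rw [AddSubgroup.mem_bot]
    exact h6

lemma construction_lemma {G : Type*} [AddCommGroup G] [Fintype G] [DecidableEq G]
    (g : G) (e d₁ d₂ r : ℕ) (hg : addOrderOf g = e)
    (hd₁ : 0 < d₁) (hd₂ : 0 < d₂) (hd₂e : d₂ ∣ e)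
    (hr1 : 1 ≤ r) (hre : r ≤ d₁ * e)
    (H : AddSubgroup G) (hH : Nat.card H = d₁) (hHg : H ⊓ zmultiples g = ⊥) :
    ∃ A : Finset G, A.card = r ∧ (A - A).card ≤ (d₁ * d₂) * (2 * (r ⌈/⌉ (d₁ * d₂)) - 1) := by
  have he0 : 0 < e := by
    rcases Nat.eq_zero_or_pos e with h | h
    · subst h; simp at hre; omega
    · exact h
  set m := e / d₂ with hm
  have hm0 : 0 < m := Nat.div_pos (Nat.le_of_dvd he0 hd₂e) hd₂
  have hmd₂ : d₂ * m = e := Nat.mul_div_cancel' hd₂e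
  have hme : m ∣ e := Dvd.intro_left d₂ hmd₂
  set c := m • g with hc
  set C := zmultiples c with hC
  have hCle : C ≤ zmultiples g := by
    rw [hC, AddSubgroup.zmultiples_le]
    exact nsmul_mem (mem_zmultiples g) m
  have hcardC : Nat.card C = d₂ := by
    rw [hC, Nat.card_zmultiples, hc, addOrderOf_nsmul, hg, Nat.gcd_eq_right hme,
      hm, Nat.div_div_self hd₂e he0.ne']
  set d := d₁ * d₂ with hd
  have hd0 : 0 < d := Nat.mul_pos hd₁ hd₂
  set k := r ⌈/⌉ d with hk
  have hrk : r ≤ d * k := le_smul_ceilDiv hd0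
  have hk1 : 1 ≤ k := by
    by_contra h
    push_neg at h
    interval_cases k <;> omega
  have hkm : k ≤ m := by
    rw [hk]
    rw [ceilDiv_le_iff_le_smul hd0]
    calc r ≤ d₁ * e := hre
    _ = d • m := by rw [hd, smul_eq_mul, ← hmd₂]; ring
  -- the key fact: small multiples of g are not in H + C unless zero
  have key : ∀ z : ℤ, z.natAbs < m → ∀ h ∈ H, ∀ cc ∈ C, z • g = h + cc → z = 0 := by
    intro z hz h hh cc hcc heq
    have hhg : h ∈ H ⊓ zmultiples g := by
      refine AddSubgroup.mem_inf.mpr ⟨hh, ?_⟩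
      have : h = z • g - cc := by rw [heq]; abel
      rw [this]
      exact sub_mem (zsmul_mem (mem_zmultiples g) z) (hCle hcc)
    rw [hHg, AddSubgroup.mem_bot] at hhg
    subst hhg
    rw [zero_add] at heq
    obtain ⟨t, ht⟩ := AddSubgroup.mem_zmultiples_iff.mp (heq ▸ hcc)
    -- ht : t • c = z • g
    have hzt : (t * m) • g = z • g := by
      rw [mul_smul, natCast_zsmul g m, ← hc]
      exact ht
    have h1 : (z - t * m) • g = 0 := by rw [sub_smul, hzt, sub_self]
    have h2 : (e : ℤ) ∣ z - t * m := by
      rw [← hg]; exact addOrderOf_dvd_iff_zsmul_eq_zero.mpr h1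
    have h3 : (m : ℤ) ∣ z := by
      have hme' : (m : ℤ) ∣ (e : ℤ) := Int.natCast_dvd_natCast.mpr hme
      have hzz : z = (z - t * m) + t * m := by ring
      rw [hzz]
      exact dvd_add (hme'.trans h2) ⟨t, by ring⟩
    have h4 : m ∣ z.natAbs := Int.natCast_dvd.mp h3
    have h5 : z.natAbs = 0 := Nat.eq_zero_of_dvd_of_lt h4 hz
    omega
  haveI : Fintype H := Fintype.ofFinite H
  haveI : Fintype C := Fintype.ofFinite C
  have rearr : ∀ (i j : ℕ) (h h' cc cc' : G),
      (i • g + (h + cc)) - (j • g + (h' + cc')) =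
        ((i:ℤ) - (j:ℤ)) • g + ((h - h') + (cc - cc')) := by
    intro i j h h' cc cc'
    rw [sub_zsmul, natCast_zsmul, natCast_zsmul]
    abel
  set f : Fin k × (H × C) → G := fun q => (q.1 : ℕ) • g + ((q.2.1 : G) + (q.2.2 : G)) with hf
  have hfinj : Function.Injective f := by
    rintro ⟨i, h, cc⟩ ⟨j, h', cc'⟩ heq
    simp only [hf] at heq
    have h0 : (((i:ℕ):ℤ) - ((j:ℕ):ℤ)) • g + (((h:G) - h') + ((cc:G) - cc')) = 0 := by
      rw [← rearr, heq, sub_self]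
    have hz : (((i:ℕ):ℤ) - ((j:ℕ):ℤ)) • g = ((h':G) - h) + ((cc':G) - cc) := by
      have h1 := eq_neg_of_add_eq_zero_left h0
      rw [h1]; abel
    have hzabs : (((i:ℕ):ℤ) - ((j:ℕ):ℤ)).natAbs < m := by
      have hi := i.isLt; have hj := j.isLt
      omega
    have hz0 := key _ hzabs _ (sub_mem h'.2 h.2) _ (sub_mem cc'.2 cc.2) hz
    have hij : (i : ℕ) = (j : ℕ) := by omega
    obtain rfl : i = j := Fin.ext hij
    have h2 : (h:G) + cc = (h':G) + cc' := add_left_cancel heq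
    have h3 : (h:G) - h' = (cc':G) - cc := by
      rw [sub_eq_sub_iff_add_eq_add, h2, add_comm]
    have hx : (h:G) - h' ∈ H ⊓ zmultiples g :=
      AddSubgroup.mem_inf.mpr ⟨sub_mem h.2 h'.2, hCle (h3 ▸ sub_mem cc'.2 cc.2)⟩
    rw [hHg, AddSubgroup.mem_bot, sub_eq_zero] at hx
    have hcc : (cc:G) = cc' := by
      have := h2; rw [hx] at this; exact add_left_cancel this
    simp only [Prod.mk.injEq]
    exact ⟨trivial, Subtype.ext hx, Subtype.ext hcc⟩
  set S : Finset G := Finset.image f Finset.univ with hS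
  have hcardS : S.card = k * (d₁ * d₂) := by
    rw [hS, Finset.card_image_of_injective _ hfinj, Finset.card_univ, Fintype.card_prod,
      Fintype.card_prod, Fintype.card_fin, ← Nat.card_eq_fintype_card,
      ← Nat.card_eq_fintype_card, hH, hcardC]
  have hrS : r ≤ S.card := by
    rw [hcardS]
    calc r ≤ d * k := hrk
    _ = k * (d₁ * d₂) := by rw [hd]; ring
  obtain ⟨A, hAS, hAcard⟩ := Finset.exists_subset_card_eq hrS
  refine ⟨A, hAcard, ?_⟩
  set I : Finset ℤ := Finset.Icc (-((k:ℤ)-1)) ((k:ℤ)-1) with hI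
  set f2 : ℤ × (H × C) → G := fun q => q.1 • g + ((q.2.1 : G) + (q.2.2 : G)) with hf2
  set U : Finset G := Finset.image f2 (I ×ˢ (Finset.univ : Finset (H × C))) with hU
  have hsub : A - A ⊆ U := by
    intro x hx
    rw [Finset.mem_sub] at hx
    obtain ⟨y, hy, w, hw, rfl⟩ := hx
    obtain ⟨⟨i, h, cc⟩, -, rfl⟩ := Finset.mem_image.mp (hAS hy)
    obtain ⟨⟨j, h', cc'⟩, -, rfl⟩ := Finset.mem_image.mp (hAS hw)
    rw [hU, Finset.mem_image]
    refine ⟨((((i:ℕ)):ℤ) - (((j:ℕ)):ℤ), ⟨h - h', cc - cc'⟩), ?_, ?_⟩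
    · rw [Finset.mem_product]
      refine ⟨?_, Finset.mem_univ _⟩
      rw [hI, Finset.mem_Icc]
      have hi := i.isLt; have hj := j.isLt
      omega
    · simp only [hf, hf2, AddSubgroup.coe_sub]
      exact (rearr i j h h' cc cc').symm
  have hIcard : I.card = 2 * k - 1 := by
    rw [hI, Int.card_Icc]
    omega
  calc (A - A).card ≤ U.card := Finset.card_le_card hsub
  _ ≤ ((I ×ˢ (Finset.univ : Finset (H × C)))).card := Finset.card_image_le
  _ = I.card * Fintype.card (H × C) := by rw [Finset.card_product, Finset.card_univ]
  _ = (2 * k - 1) * (d₁ * d₂) := by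
      rw [hIcard, Fintype.card_prod, ← Nat.card_eq_fintype_card,
        ← Nat.card_eq_fintype_card, hH, hcardC]
  _ = (d₁ * d₂) * (2 * k - 1) := mul_comm _ _


/-- `rhoMinus G r` is the minimum cardinality of `A - A` over subsets `A ⊆ G` with `|A| = r`. -/
noncomputable def rhoMinus (G : Type*) [AddCommGroup G] [Fintype G] [DecidableEq G] (r : ℕ) : ℕ :=
  sInf {n : ℕ | ∃ A : Finset G, A.card = r ∧ (A - A).card = n}

/-- Theorem (upper bound): for a finite abelian group `G` of order `N` and exponent `e`, and
`1 ≤ r ≤ N`, we have `ρ⁻_G(r) ≤ min_{d ∈ D(N,e,r)} d (2⌈r/d⌉ - 1)`, where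
`D(N,e,r) = {d₁ d₂ | d₁ a positive divisor of N/e, d₂ a positive divisor of e, d₁ e ≥ r}`. -/
theorem rhoMinus_le_min_div {G : Type*} [AddCommGroup G] [Fintype G] [DecidableEq G]
    (N e : ℕ) (hN : N = Fintype.card G) (he : e = AddMonoid.exponent G)
    (r : ℕ) (hr1 : 1 ≤ r) (hrN : r ≤ N) :
    rhoMinus G r ≤
      sInf ((fun d => d * (2 * (r ⌈/⌉ d) - 1)) ''
        {d : ℕ | ∃ d₁ d₂ : ℕ, 0 < d₁ ∧ d₁ ∣ N / e ∧ 0 < d₂ ∧ d₂ ∣ e ∧ r ≤ d₁ * e ∧ d = d₁ * d₂}) := by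
  have hExp : AddMonoid.ExponentExists G := AddMonoid.ExponentExists.of_finite
  have he0 : 0 < e := he ▸ AddMonoid.exponent_pos.mpr hExp
  have hN0 : 0 < N := hN ▸ Fintype.card_pos
  have heN : e ∣ N := by rw [hN, he]; exact AddGroup.exponent_dvd_card
  have hD : ((N / e) * e : ℕ) ∈
      {d : ℕ | ∃ d₁ d₂ : ℕ, 0 < d₁ ∧ d₁ ∣ N / e ∧ 0 < d₂ ∧ d₂ ∣ e ∧ r ≤ d₁ * e ∧ d = d₁ * d₂} :=
    ⟨N / e, e, Nat.div_pos (Nat.le_of_dvd hN0 heN) he0, dvd_rfl, he0, dvd_rfl,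
      by rw [Nat.div_mul_cancel heN]; exact hrN, rfl⟩
  have hne : ((fun d => d * (2 * (r ⌈/⌉ d) - 1)) ''
      {d : ℕ | ∃ d₁ d₂ : ℕ, 0 < d₁ ∧ d₁ ∣ N / e ∧ 0 < d₂ ∧ d₂ ∣ e ∧ r ≤ d₁ * e ∧
        d = d₁ * d₂}).Nonempty := ⟨_, Set.mem_image_of_mem _ hD⟩
  obtain ⟨dd, hdd, heqv⟩ := Nat.sInf_mem hne
  obtain ⟨d₁, d₂, hd₁, hd₁N, hd₂, hd₂e, hrd, rfl⟩ := hdd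
  rw [← heqv]
  obtain ⟨g, hg⟩ := AddMonoid.exists_addOrderOf_eq_exponent hExp
  have hgE : addOrderOf g = e := by rw [hg, ← he]
  obtain ⟨H, hHcard, hHg⟩ := exists_addSubgroup_card_inf_zmultiples_bot d₁ G g hg
    (by rw [Nat.card_eq_fintype_card, ← hN, ← he]; exact hd₁N)
  obtain ⟨A, hAcard, hAbound⟩ :=
    construction_lemma g e d₁ d₂ r hgE hd₁ hd₂ hd₂e hr1 hrd H hHcard hHg
  exact le_trans (Nat.sInf_le ⟨A, hAcard, rfl⟩) hAbound
end

section
/- Let p > 2 be a prime number, and let c and v be integers with c = (p−1)/2 and 1 ≤ v ≤ (p−1)/2. Let m = cp + v. Then ρ_±((ℤ/pℤ)², m, 2) = p² − 1. -/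
open Pointwise

/-- The 2-fold signed sumset `2±A = (A + A) ∪ (-(A + A)) ∪ {a - b | a, b ∈ A, a ≠ b}`. -/
def signedSumset2 {G : Type*} [AddCommGroup G] [DecidableEq G] (A : Finset G) : Finset G :=
  ((A + A) ∪ -(A + A)) ∪ A.offDiag.image fun q => q.1 - q.2

/-- `rhoPM G m` is the minimum cardinality of `2±A` over subsets `A ⊆ G` with `|A| = m`. -/
noncomputable def rhoPM (G : Type*) [AddCommGroup G] [Fintype G] [DecidableEq G] (m : ℕ) : ℕ :=
  sInf {n : ℕ | ∃ A : Finset G, A.card = m ∧ (signedSumset2 A).card = n}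

open Finset

set_option linter.unusedSectionVars false

lemma core_count {p : ℕ} [Fact p.Prime] (hp2 : 2 < p)
    (B : Finset (ZMod p × ZMod p)) (g : ZMod p × ZMod p)
    (hB : ∀ b ∈ B, b + g ∉ B) : B.card ≤ p * ((p - 1) / 2) := by
  have hodd : Odd p := (Fact.out : p.Prime).odd_of_ne_two (by omega)
  have h2c : 2 * ((p - 1) / 2) + 1 = p := by
    obtain ⟨k, hk⟩ := hodd; omega
  set c := (p - 1) / 2 with hcdef
  -- per-x bound
  have step1 : ∀ x : ZMod p × ZMod p,
      (univ.filter fun i : ZMod p => x - i • g ∈ B).card ≤ c := by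
    intro x
    set S := univ.filter fun i : ZMod p => x - i • g ∈ B with hS
    have hdisj : Disjoint S (S.image (· + 1)) := by
      rw [Finset.disjoint_left]
      intro j hj hj'
      simp only [hS, mem_image, mem_filter, mem_univ, true_and] at hj hj'
      obtain ⟨i, hi, rfl⟩ := hj'
      have h1 : (i + 1) • g = i • g + g := by rw [add_smul, one_smul]
      have h2 : x - (i + 1) • g + g = x - i • g := by rw [h1]; abel
      exact hB _ hj (h2 ▸ hi)
    have hcard : S.card + S.card ≤ p := by
      have := Finset.card_union_of_disjoint hdisj
      have hle : (S ∪ S.image (· + 1)).card ≤ Fintype.card (ZMod p) :=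
        Finset.card_le_univ _
      rw [ZMod.card] at hle
      rw [Finset.card_image_of_injective _ (add_left_injective (1 : ZMod p))] at this
      omega
    omega
  -- double counting
  have step2 : p * B.card = ∑ x : ZMod p × ZMod p,
      (univ.filter fun i : ZMod p => x - i • g ∈ B).card := by
    have h1 : ∀ i : ZMod p,
        (univ.filter fun x : ZMod p × ZMod p => x - i • g ∈ B).card = B.card := by
      intro i
      have : (univ.filter fun x : ZMod p × ZMod p => x - i • g ∈ B)
          = B.image (· + i • g) := by
        ext z
        simp only [mem_filter, mem_univ, true_and, mem_image]
        constructor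
        · intro h; exact ⟨_, h, by abel⟩
        · rintro ⟨b, hb, rfl⟩; simpa using hb
      rw [this, Finset.card_image_of_injective _ (add_left_injective _)]
    calc p * B.card = ∑ i : ZMod p, B.card := by
          rw [Finset.sum_const, card_univ, ZMod.card, smul_eq_mul]
      _ = ∑ i : ZMod p, (univ.filter fun x : ZMod p × ZMod p => x - i • g ∈ B).card := by
          simp_rw [h1]
      _ = _ := by
          simp_rw [Finset.card_filter]
          exact (Finset.sum_comm ..).symm
  have step3 : p * B.card ≤ p * p * c := by
    rw [step2]
    calc ∑ x : ZMod p × ZMod p, (univ.filter fun i : ZMod p => x - i • g ∈ B).card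
        ≤ ∑ _x : ZMod p × ZMod p, c := Finset.sum_le_sum fun x _ => step1 x
      _ = p * p * c := by
          rw [Finset.sum_const, card_univ, Fintype.card_prod, ZMod.card, smul_eq_mul]
  have hp0 : 0 < p := by omega
  calc B.card ≤ p * c := Nat.le_of_mul_le_mul_left (by linarith [step3, Nat.mul_assoc p p c]) hp0
    _ = p * ((p-1)/2) := rfl

lemma mem_sss2 {p : ℕ} [Fact p.Prime] (hp2 : 2 < p)
    (A : Finset (ZMod p × ZMod p)) (hA : p * ((p - 1) / 2) < A.card)
    (g : ZMod p × ZMod p) (hg : g ≠ 0) : g ∈ signedSumset2 A := by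
  by_contra hng
  simp only [signedSumset2, mem_union, mem_image, Finset.mem_add, Finset.mem_neg,
    mem_offDiag, not_or, not_exists] at hng
  obtain ⟨⟨h1, h2⟩, h3⟩ := hng
  push_neg at h1 h2 h3
  set B := A ∪ (-A) with hB
  have hBg : ∀ b ∈ B, b + g ∉ B := by
    intro b hb hbg
    simp only [hB, mem_union, Finset.mem_neg] at hb hbg
    obtain hb | ⟨a, ha, rfl⟩ := hb
    · obtain hbg | ⟨a', ha', he⟩ := hbg
      · refine h3 (b + g, b) ⟨hbg, hb, ?_⟩ (add_sub_cancel_left b g)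
        intro h
        exact hg (by simpa using congrArg (fun z => z - b) h)
      · exact h2 (a' + b) ⟨a', ha', b, hb, rfl⟩
          (by rw [neg_add, he, add_comm b g, add_neg_cancel_right])
    · obtain hbg | ⟨a', ha', he⟩ := hbg
      · exact h1 (-a + g) hbg a ha (by rw [add_comm]; exact add_neg_cancel_left a g)
      · have hne : a ≠ a' := by
          intro h; subst h; apply hg
          have : (-a : ZMod p × ZMod p) = -a + g := he
          simpa using this.symm
        refine h3 (a, a') ⟨ha, ha', hne⟩ ?_
        have h4 := congrArg (fun z => a + z) he
        simpa [sub_eq_add_neg, add_neg_cancel_left] using h4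
  have := core_count hp2 B g hBg
  have hsub : A ⊆ B := Finset.subset_union_left
  have := Finset.card_le_card hsub
  omega

lemma lower_bound {p : ℕ} [Fact p.Prime] (hp2 : 2 < p)
    (A : Finset (ZMod p × ZMod p)) (hA : p * ((p - 1) / 2) < A.card) :
    p ^ 2 - 1 ≤ (signedSumset2 A).card := by
  have hsub : univ.erase (0 : ZMod p × ZMod p) ⊆ signedSumset2 A := fun z hz =>
    mem_sss2 hp2 A hA z (Finset.ne_of_mem_erase hz)
  have h := Finset.card_le_card hsub
  rwa [Finset.card_erase_of_mem (mem_univ _), card_univ, Fintype.card_prod,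
    ZMod.card, ← sq] at h

section construction
variable {p : ℕ} [Fact p.Prime] (hp2 : 2 < p) (c v : ℕ)
  (hc : c = (p - 1) / 2) (hv1 : 1 ≤ v) (hv2 : v ≤ (p - 1) / 2)

def myA (p : ℕ) [NeZero p] (c v : ℕ) : Finset (ZMod p × ZMod p) :=
  ((Finset.Ico 1 (c+1)).image (Nat.cast : ℕ → ZMod p)) ×ˢ (univ : Finset (ZMod p)) ∪
    ({(0 : ZMod p)} ×ˢ ((Finset.Ico 1 (v+1)).image (Nat.cast : ℕ → ZMod p)))

lemma cast_inj_on {n : ℕ} (hn : n ≤ p) :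
    Set.InjOn (Nat.cast : ℕ → ZMod p) (Finset.Ico 1 n) := by
  intro a ha b hb hab
  simp only [Finset.coe_Ico, Set.mem_Ico] at ha hb
  have ha' : a < p := by omega
  have hb' : b < p := by omega
  have := congrArg ZMod.val hab
  rwa [ZMod.val_cast_of_lt ha', ZMod.val_cast_of_lt hb'] at this

include hp2 hc hv1 hv2 in
lemma myA_card : (myA p c v).card = c * p + v := by
  have h2c : 2 * c + 1 = p := by
    obtain ⟨k, hk⟩ := (Fact.out : p.Prime).odd_of_ne_two (by omega); omega
  have hdisj : Disjoint
      (((Finset.Ico 1 (c+1)).image (Nat.cast : ℕ → ZMod p)) ×ˢ (univ : Finset (ZMod p)))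
      ({(0 : ZMod p)} ×ˢ ((Finset.Ico 1 (v+1)).image (Nat.cast : ℕ → ZMod p))) := by
    rw [Finset.disjoint_left]
    rintro ⟨x1, x2⟩ hx hx'
    simp only [Finset.mem_product, Finset.mem_image, Finset.mem_Ico, Finset.mem_singleton] at hx hx'
    obtain ⟨⟨i, hi, hix⟩, -⟩ := hx
    rw [hx'.1] at hix
    have : (i : ZMod p).val = i := ZMod.val_cast_of_lt (by omega)
    rw [hix] at this
    simp at this
    omega
  rw [myA, Finset.card_union_of_disjoint hdisj, Finset.card_product, Finset.card_product,
    Finset.card_image_of_injOn (cast_inj_on (by omega)),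
    Finset.card_image_of_injOn (cast_inj_on (by omega)),
    Nat.card_Ico, Nat.card_Ico, Finset.card_singleton, card_univ, ZMod.card]
  simp

include hp2 hc hv1 hv2 in
lemma myA_zero_notMem : (0 : ZMod p × ZMod p) ∉ signedSumset2 (myA p c v) := by
  have h2c : 2 * c + 1 = p := by
    obtain ⟨k, hk⟩ := (Fact.out : p.Prime).odd_of_ne_two (by omega); omega
  -- characterize membership
  have hmem : ∀ a : ZMod p × ZMod p, a ∈ myA p c v →
      (∃ i, 1 ≤ i ∧ i ≤ c ∧ a.1 = (i : ZMod p)) ∨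
      (a.1 = 0 ∧ ∃ s, 1 ≤ s ∧ s ≤ v ∧ a.2 = (s : ZMod p)) := by
    rintro ⟨a1, a2⟩ ha
    simp only [myA, Finset.mem_union, Finset.mem_product, Finset.mem_image,
      Finset.mem_Ico, Finset.mem_singleton, Finset.mem_univ, and_true] at ha
    rcases ha with ⟨i, hi, hix⟩ | ⟨h0, s, hs, hsx⟩
    · exact Or.inl ⟨i, by omega, by omega, hix.symm⟩
    · exact Or.inr ⟨h0, s, by omega, by omega, hsx.symm⟩
  have hnz : ∀ k : ℕ, 1 ≤ k → k ≤ p - 1 → ((k : ZMod p)) ≠ 0 := by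
    intro k h1 h2 h0
    rw [ZMod.natCast_eq_zero_iff] at h0
    have := Nat.le_of_dvd (by omega) h0
    omega
  -- no two elements of A sum to zero
  have hsum : ∀ a ∈ myA p c v, ∀ b ∈ myA p c v, a + b ≠ 0 := by
    intro a ha b hb hab
    have ha' := hmem a ha
    have hb' := hmem b hb
    have hab1 : a.1 + b.1 = 0 := congrArg Prod.fst hab
    have hab2 : a.2 + b.2 = 0 := congrArg Prod.snd hab
    rcases ha' with ⟨i, hi1, hi2, hia⟩ | ⟨ha0, s, hs1, hs2, hsa⟩ <;>
      rcases hb' with ⟨j, hj1, hj2, hjb⟩ | ⟨hb0, t, ht1, ht2, htb⟩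
    · rw [hia, hjb, ← Nat.cast_add] at hab1
      exact hnz (i + j) (by omega) (by omega) hab1
    · rw [hia, hb0, add_zero] at hab1
      exact hnz i (by omega) (by omega) hab1
    · rw [hjb, ha0, zero_add] at hab1
      exact hnz j (by omega) (by omega) hab1
    · rw [hsa, htb, ← Nat.cast_add] at hab2
      exact hnz (s + t) (by omega) (by omega) hab2
  intro h0
  simp only [signedSumset2, mem_union, mem_image, Finset.mem_add, Finset.mem_neg,
    Finset.mem_offDiag] at h0
  rcases h0 with (⟨a, ha, b, hb, hab⟩ | ⟨x, ⟨a, ha, b, hb, hab⟩, hx⟩) | ⟨q, hq, hq0⟩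
  · exact hsum a ha b hb hab
  · apply hsum a ha b hb
    rw [hab, ← neg_eq_zero, hx]
  · exact hq.2.2 (sub_eq_zero.mp hq0)
end construction

theorem rhoPM_eq_of_middle' (p : ℕ) [Fact p.Prime] (hp2 : 2 < p) (c v m : ℕ)
    (hc : c = (p - 1) / 2) (hv1 : 1 ≤ v) (hv2 : v ≤ (p - 1) / 2)
    (hm : m = c * p + v) :
    sInf {n : ℕ | ∃ A : Finset (ZMod p × ZMod p),
      A.card = m ∧ (signedSumset2 A).card = n} = p ^ 2 - 1 := by
  subst hm hc
  have hcp : p * ((p - 1) / 2) = ((p - 1) / 2) * p := Nat.mul_comm _ _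
  have hmlt : p * ((p - 1) / 2) < (p - 1) / 2 * p + v := by omega
  have hAcard := myA_card hp2 ((p - 1) / 2) v rfl hv1 hv2
  have hA0 := myA_zero_notMem hp2 ((p - 1) / 2) v rfl hv1 hv2
  have hub : (signedSumset2 (myA p ((p - 1) / 2) v)).card ≤ p ^ 2 - 1 := by
    have hsub : signedSumset2 (myA p ((p - 1) / 2) v) ⊆ univ.erase 0 := fun z hz =>
      Finset.mem_erase.mpr ⟨fun h => hA0 (h ▸ hz), mem_univ z⟩
    have h := Finset.card_le_card hsub
    rwa [Finset.card_erase_of_mem (Finset.mem_univ _), card_univ, Fintype.card_prod,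
      ZMod.card, ← sq] at h
  have hlb := lower_bound hp2 (myA p ((p - 1) / 2) v) (by omega)
  have hexact : (signedSumset2 (myA p ((p - 1) / 2) v)).card = p ^ 2 - 1 :=
    le_antisymm hub hlb
  have hmemS : p ^ 2 - 1 ∈ {n : ℕ | ∃ A : Finset (ZMod p × ZMod p),
      A.card = (p - 1) / 2 * p + v ∧ (signedSumset2 A).card = n} :=
    ⟨myA p ((p - 1) / 2) v, hAcard, hexact⟩
  refine le_antisymm (Nat.sInf_le hmemS) (le_csInf ⟨_, hmemS⟩ ?_)
  rintro n ⟨A, hAc, rfl⟩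
  exact lower_bound hp2 A (by omega)


/-- Theorem: for a prime `p > 2`, integers `c = (p-1)/2` and `1 ≤ v ≤ (p-1)/2`, and `m = cp + v`,
we have `ρ±((ℤ/pℤ)², m, 2) = p² - 1`. -/
theorem rhoPM_eq_of_middle (p : ℕ) [Fact p.Prime] (hp2 : 2 < p) (c v m : ℕ)
    (hc : c = (p - 1) / 2) (hv1 : 1 ≤ v) (hv2 : v ≤ (p - 1) / 2)
    (hm : m = c * p + v) :
    rhoPM (ZMod p × ZMod p) m = p ^ 2 - 1 :=
  rhoPM_eq_of_middle' p hp2 c v m hc hv1 hv2 hm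
end

section
/- Let G = (ℤ/pℤ)^d where p is prime and d ≥ 0, and let t and r be integers with 0 ≤ t ≤ d, p^t < r ≤ p^{t+1}, and r ≤ p^d. Then ρ_G⁻(r) ≤ p^t · min{2·⌈r/p^t⌉ − 1, p}. -/
open Pointwise

/-- Lemma (upper bound): for `G = (ℤ/pℤ)^d` with `p` prime, `0 ≤ t ≤ d`, `p^t < r ≤ p^(t+1)` and
`r ≤ p^d`, we have `ρ⁻_G(r) ≤ p^t · min {2⌈r/p^t⌉ - 1, p}`. -/
theorem rhoMinus_le_vector_space (p : ℕ) [Fact p.Prime] (d t r : ℕ) (htd : t ≤ d)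
    (hr1 : p ^ t < r) (hr2 : r ≤ p ^ (t + 1)) (hr3 : r ≤ p ^ d) :
    rhoMinus (Fin d → ZMod p) r ≤ p ^ t * min (2 * (r ⌈/⌉ p ^ t) - 1) p := by
  classical
  have hp : 1 < p := (Fact.out : p.Prime).one_lt
  have htd' : t < d := (pow_lt_pow_iff_right₀ hp).mp (hr1.trans_le hr3)
  set m := r ⌈/⌉ p ^ t with hm
  have hpt : 0 < p ^ t := pow_pos (by omega) t
  have hrm : r ≤ p ^ t * m := le_smul_ceilDiv hpt
  have hmp : m ≤ p := (ceilDiv_le_iff_le_mul hpt).2 (by rwa [← pow_succ])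
  have hm1 : 1 ≤ m := by
    by_contra h
    push_neg at h
    interval_cases m
    · omega
  -- the interval `{0, 1, ..., m-1}` in `ZMod p`
  set S : Finset (ZMod p) := (Finset.range m).image (Nat.cast) with hS
  have hScard : S.card = m := by
    rw [hS, Finset.card_image_of_injOn, Finset.card_range]
    intro a ha b hb hab
    simp only [Finset.mem_coe, Finset.mem_range] at ha hb
    have : (a : ZMod p).val = (b : ZMod p).val := by rw [hab]
    rwa [ZMod.val_natCast_of_lt (by omega), ZMod.val_natCast_of_lt (by omega)] at this
  have hSS1 : (S - S).card ≤ 2 * m - 1 := by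
    have hsub : S - S ⊆ (Finset.Icc (-(m - 1) : ℤ) (m - 1)).image (Int.cast) := by
      intro x hx
      rw [Finset.mem_sub] at hx
      obtain ⟨a, ha, b, hb, rfl⟩ := hx
      rw [hS] at ha hb
      simp only [Finset.mem_image, Finset.mem_range] at ha hb
      obtain ⟨a, ha, rfl⟩ := ha
      obtain ⟨b, hb, rfl⟩ := hb
      refine Finset.mem_image.2 ⟨(a : ℤ) - b, ?_, by push_cast; ring⟩
      rw [Finset.mem_Icc]
      omega
    calc (S - S).card ≤ _ := Finset.card_le_card hsub
      _ ≤ (Finset.Icc (-(m - 1) : ℤ) (m - 1)).card := Finset.card_image_le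
      _ = 2 * m - 1 := by rw [Int.card_Icc]; omega
  have hSS2 : (S - S).card ≤ p := by
    simpa [ZMod.card] using Finset.card_le_univ (S - S)
  -- cardinality of box-like products
  have prodcalc : ∀ (c : Fin d → Finset (ZMod p)) (k : ℕ),
      (∀ i : Fin d, (i : ℕ) < t → (c i).card = p) → (∀ i : Fin d, (i : ℕ) = t → (c i).card = k) →
      (∀ i : Fin d, t < (i : ℕ) → (c i).card = 1) →
      (Fintype.piFinset c).card = p ^ t * k := by
    intro c k h1 h2 h3
    set c' : ℕ → ℕ := fun i => if i < t then p else if i = t then k else 1 with hc'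
    have hcc : ∀ i : Fin d, (c i).card = c' (i : ℕ) := by
      intro i
      rcases lt_trichotomy (i : ℕ) t with h | h | h
      · rw [h1 i h, hc']; simp [h]
      · rw [h2 i h, hc']; simp [h]
      · rw [h3 i h, hc']; simp [h, Nat.lt_asymm h, Nat.ne_of_gt h]
    rw [Fintype.card_piFinset, Finset.prod_congr rfl (fun i _ => hcc i),
      Fin.prod_univ_eq_prod_range c' d]
    have hc1 : ∀ i, i < t → c' i = p := fun i hi => if_pos hi
    have hc2 : c' t = k := by simp [hc']
    have hc3 : ∀ i, t < i → c' i = 1 := fun i hi => by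
      simp [hc', Nat.lt_asymm hi, (Nat.ne_of_lt hi).symm]
    have hsplit : Finset.range d = Finset.range (t + 1) ∪ Finset.Ico (t + 1) d := by
      rw [Finset.range_eq_Ico, Finset.range_eq_Ico]
      exact (Finset.Ico_union_Ico_eq_Ico (by omega) (by omega)).symm
    rw [hsplit, Finset.prod_union (by
      rw [Finset.range_eq_Ico]
      exact Finset.Ico_disjoint_Ico_consecutive 0 (t + 1) d), Finset.prod_range_succ]
    have e1 : ∏ i ∈ Finset.Ico (t + 1) d, c' i = 1 :=
      Finset.prod_eq_one fun i hi => hc3 i (Finset.mem_Ico.mp hi).1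
    have e2 : ∏ i ∈ Finset.range t, c' i = p ^ t := by
      rw [Finset.prod_congr rfl (fun i hi => hc1 i (Finset.mem_range.mp hi))]
      simp
    rw [e1, e2, hc2, mul_one]
  -- the box `B` and the difference box `D`
  set cell : Fin d → Finset (ZMod p) := fun i =>
    if (i : ℕ) < t then Finset.univ else if (i : ℕ) = t then S else {0} with hcell
  set B : Finset (Fin d → ZMod p) := Fintype.piFinset cell with hB
  set D : Finset (Fin d → ZMod p) := Fintype.piFinset (fun i => cell i - cell i) with hD
  have hcardZ : Fintype.card (ZMod p) = p := ZMod.card p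
  have hBcard : B.card = p ^ t * m := by
    refine prodcalc cell m (fun i hi => ?_) (fun i hi => ?_) (fun i hi => ?_)
    · rw [hcell]; simp only [if_pos hi]; simp [hcardZ]
    · rw [hcell]; simp only [if_neg (by omega : ¬ (i : ℕ) < t), if_pos hi]; exact hScard
    · rw [hcell]; simp only [if_neg (by omega : ¬ (i : ℕ) < t), if_neg (by omega : ¬ (i : ℕ) = t)]
      simp
  have hDcard : D.card = p ^ t * (S - S).card := by
    refine prodcalc _ _ (fun i hi => ?_) (fun i hi => ?_) (fun i hi => ?_)
    · rw [hcell]; simp only [if_pos hi]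
      have : (Finset.univ - Finset.univ : Finset (ZMod p)) = Finset.univ := by
        apply Finset.eq_univ_iff_forall.2
        intro x
        exact Finset.mem_sub.2 ⟨x, Finset.mem_univ _, 0, Finset.mem_univ _, sub_zero x⟩
      rw [this, Finset.card_univ, hcardZ]
    · rw [hcell]; simp only [if_neg (by omega : ¬ (i : ℕ) < t), if_pos hi]
    · rw [hcell]; simp only [if_neg (by omega : ¬ (i : ℕ) < t), if_neg (by omega : ¬ (i : ℕ) = t)]
      rw [Finset.singleton_sub_singleton, Finset.card_singleton]
  -- choose `A ⊆ B` with `|A| = r`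
  obtain ⟨A, hAB, hAcard⟩ := Finset.exists_subset_card_eq (hrm.trans_eq hBcard.symm)
  have hsub : A - A ⊆ D := by
    intro x hx
    rw [Finset.mem_sub] at hx
    obtain ⟨a, ha, b, hb, rfl⟩ := hx
    have ha' := Fintype.mem_piFinset.mp (hAB ha)
    have hb' := Fintype.mem_piFinset.mp (hAB hb)
    rw [hD, Fintype.mem_piFinset]
    intro i
    exact Finset.sub_mem_sub (ha' i) (hb' i)
  calc rhoMinus (Fin d → ZMod p) r ≤ (A - A).card := Nat.sInf_le ⟨A, hAcard, rfl⟩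
    _ ≤ D.card := Finset.card_le_card hsub
    _ = p ^ t * (S - S).card := hDcard
    _ ≤ p ^ t * min (2 * m - 1) p := Nat.mul_le_mul_left _ (le_min hSS1 hSS2)
end

section
/- Let p be a prime and let d₁ > d₂ ≥ 0 be integers. Let G = (ℤ/pℤ)^{d₁} and H = (ℤ/pℤ)^{d₂}. Then ρ_G⁻(r) = ρ_H⁻(r) for every integer r with 1 ≤ r ≤ p^{d₂}. -/
open Pointwise

section Aux

variable {G H : Type*} [AddCommGroup G] [Fintype G] [DecidableEq G]
  [AddCommGroup H] [Fintype H] [DecidableEq H]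

lemma image_sub_aux (f : G →+ H) (s t : Finset G) :
    (s - t).image f = s.image f - t.image f :=
  Finset.image_image₂_distrib <| map_sub f

lemma rhoMinus_le_card_sub (A : Finset G) : rhoMinus G A.card ≤ (A - A).card :=
  Nat.sInf_le ⟨A, rfl, rfl⟩

/-- Transfer: an additive hom injective on `A` pushes `A` to `H` without increasing `|A-A|`. -/
lemma rhoMinus_le_of_injOn (f : G →+ H) (A : Finset G) (hf : Set.InjOn f A) :
    rhoMinus H A.card ≤ (A - A).card := by
  have hB : (A.image f).card = A.card := Finset.card_image_of_injOn hf
  calc rhoMinus H A.card ≤ (A.image f - A.image f).card := by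
        rw [← hB]; exact rhoMinus_le_card_sub _
    _ = ((A - A).image f).card := by rw [image_sub_aux]
    _ ≤ (A - A).card := Finset.card_image_le

lemma exists_rhoMinus_min (r : ℕ) (h : r ≤ Fintype.card G) :
    ∃ A : Finset G, A.card = r ∧ (A - A).card = rhoMinus G r := by
  have hne : {n : ℕ | ∃ A : Finset G, A.card = r ∧ (A - A).card = n}.Nonempty := by
    obtain ⟨A, -, hA⟩ := Finset.exists_subset_card_eq
      (s := (Finset.univ : Finset G)) (n := r) (by simpa using h)
    exact ⟨(A - A).card, A, hA, rfl⟩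
  exact Nat.sInf_mem hne

lemma rhoMinus_le_rhoMinus (f : G →+ H) (hf : Function.Injective f) (r : ℕ)
    (h : r ≤ Fintype.card G) : rhoMinus H r ≤ rhoMinus G r := by
  obtain ⟨A, hAc, hAm⟩ := exists_rhoMinus_min r h
  rw [← hAm, ← hAc]
  exact rhoMinus_le_of_injOn f A (hf.injOn)

lemma rhoMinus_le_card (r : ℕ) (h : r ≤ Fintype.card G) :
    rhoMinus G r ≤ Fintype.card G := by
  obtain ⟨A, hAc, hAm⟩ := exists_rhoMinus_min (G := G) r h
  rw [← hAm]
  exact le_trans (Finset.card_le_univ _) (by simp)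

end Aux

/-- The extend-by-zero embedding `(Fin d₂ → ZMod p) →+ (Fin d₁ → ZMod p)`. -/
def extendZero (p d₁ d₂ : ℕ) (h : d₂ ≤ d₁) : (Fin d₂ → ZMod p) →+ (Fin d₁ → ZMod p) where
  toFun x := fun i => if hi : (i : ℕ) < d₂ then x ⟨i, hi⟩ else 0
  map_zero' := by
    funext i
    split <;> simp
  map_add' x y := by funext i; by_cases hi : (i : ℕ) < d₂ <;> simp [hi]

lemma extendZero_injective (p d₁ d₂ : ℕ) (h : d₂ ≤ d₁) :
    Function.Injective (extendZero p d₁ d₂ h) := by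
  intro x y hxy
  funext j
  have := congrFun hxy ⟨j, lt_of_lt_of_le j.isLt h⟩
  simpa [extendZero, j.isLt] using this

lemma card_pi_fin (p d : ℕ) [Fact p.Prime] :
    Fintype.card (Fin d → ZMod p) = p ^ d := by
  simp [ZMod.card]

lemma keygen_aux (p q : ℕ) (hp : 2 ≤ p) (hq : 1 ≤ q) :
    (p - 1) * (q - 1) + 1 < p * q := by
  obtain ⟨x, hx⟩ : ∃ x, p = x + 2 := ⟨p - 2, by omega⟩
  obtain ⟨y, hy⟩ : ∃ y, q = y + 1 := ⟨q - 1, by omega⟩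
  subst hx; subst hy
  have h3 : x + 2 - 1 = x + 1 := by omega
  have h4 : y + 1 - 1 = y := by omega
  rw [h3, h4]
  nlinarith

/-- Key step: a set in `F_p^{d+1}` with small difference set can be pushed down to `F_p^d`. -/
lemma step_down (p : ℕ) [Fact p.Prime] (d r : ℕ) (A : Finset (Fin (d + 1) → ZMod p))
    (hA : A.card = r) (hr : 1 ≤ r) (hm : (A - A).card ≤ p ^ d) :
    rhoMinus (Fin d → ZMod p) r ≤ (A - A).card := by
  classical
  have hp : 2 ≤ p := (Fact.out : p.Prime).two_le
  -- A is nonempty, so 0 ∈ A - A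
  have hAne : A.Nonempty := Finset.card_pos.mp (by omega)
  have h0 : (0 : Fin (d + 1) → ZMod p) ∈ A - A := by
    obtain ⟨a, ha⟩ := hAne
    exact Finset.mem_sub.mpr ⟨a, ha, a, ha, sub_self a⟩
  set D : Finset (Fin (d + 1) → ZMod p) := (A - A).erase 0 with hD
  have hDcard : D.card = (A - A).card - 1 := Finset.card_erase_of_mem h0
  have hDle : D.card ≤ p ^ d - 1 := by omega
  -- bad set
  set S : Finset (Fin (d + 1) → ZMod p) :=
    Finset.image₂ (fun (c : ZMod p) (v : Fin (d + 1) → ZMod p) => c • v)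
    ((Finset.univ : Finset (ZMod p)).erase 0) D with hS
  set T : Finset (Fin (d + 1) → ZMod p) := insert 0 S with hT
  have hScard : S.card ≤ (p - 1) * (p ^ d - 1) := by
    calc S.card ≤ ((Finset.univ : Finset (ZMod p)).erase 0).card * D.card := Finset.card_image₂_le _ _ _
      _ ≤ (p - 1) * (p ^ d - 1) := by
          apply Nat.mul_le_mul _ hDle
          have : ((Finset.univ : Finset (ZMod p)).erase 0).card = Fintype.card (ZMod p) - 1 := by
            rw [Finset.card_erase_of_mem (Finset.mem_univ _), Finset.card_univ]
          rw [this, ZMod.card]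
  have hTlt : T.card < Fintype.card (Fin (d + 1) → ZMod p) := by
    have h1 : T.card ≤ S.card + 1 := Finset.card_insert_le _ _
    have h2 : Fintype.card (Fin (d + 1) → ZMod p) = p ^ (d + 1) := card_pi_fin p (d + 1)
    have hpd : 1 ≤ p ^ d := Nat.one_le_pow _ _ (by omega)
    have key : (p - 1) * (p ^ d - 1) + 1 < p ^ (d + 1) := by
      have := keygen_aux p (p ^ d) hp hpd
      have h4 : p ^ (d + 1) = p * p ^ d := by ring
      omega
    omega
  -- choose v outside T
  have : ∃ v : Fin (d + 1) → ZMod p, v ∉ T := by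
    by_contra hcon
    push_neg at hcon
    have : (Finset.univ : Finset (Fin (d + 1) → ZMod p)) ⊆ T := fun v _ => hcon v
    have := Finset.card_le_card this
    simp only [Finset.card_univ] at this
    omega
  obtain ⟨v, hv⟩ := this
  have hv0 : v ≠ 0 := fun h => hv (h ▸ Finset.mem_insert_self 0 S)
  have hvD : ∀ c : ZMod p, c • v ∉ D := by
    intro c hc
    by_cases hc0 : c = 0
    · subst hc0
      rw [zero_smul] at hc
      exact (Finset.mem_erase.mp hc).1 rfl
    · apply hv
      refine Finset.mem_insert_of_mem ?_
      refine Finset.mem_image₂.mpr ⟨c⁻¹, ?_, c • v, hc, ?_⟩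
      · exact Finset.mem_erase.mpr ⟨inv_ne_zero hc0, Finset.mem_univ _⟩
      · rw [smul_smul, inv_mul_cancel₀ hc0, one_smul]
  -- quotient by span of v
  set W : Submodule (ZMod p) (Fin (d + 1) → ZMod p) := Submodule.span (ZMod p) {v} with hW
  have hWfr : Module.finrank (ZMod p) ((Fin (d + 1) → ZMod p) ⧸ W) = d := by
    have h1 := Submodule.finrank_quotient_add_finrank W
    have h2 : Module.finrank (ZMod p) W = 1 := finrank_span_singleton hv0
    have h3 : Module.finrank (ZMod p) (Fin (d + 1) → ZMod p) = d + 1 :=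
      Module.finrank_fin_fun (ZMod p)
    omega
  have e : ((Fin (d + 1) → ZMod p) ⧸ W) ≃ₗ[ZMod p] (Fin d → ZMod p) :=
    LinearEquiv.ofFinrankEq _ _ (by rw [hWfr, Module.finrank_fin_fun])
  set φ : (Fin (d + 1) → ZMod p) →ₗ[ZMod p] (Fin d → ZMod p) := e.toLinearMap ∘ₗ W.mkQ with hφ
  have hinj : Set.InjOn φ A := by
    intro a ha b hb hab
    have : W.mkQ a = W.mkQ b := e.injective hab
    have hmem : a - b ∈ W := by
      rw [← Submodule.Quotient.eq]
      exact this
    obtain ⟨c, hc⟩ := Submodule.mem_span_singleton.mp hmem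
    by_contra hne
    have habA : a - b ∈ A - A := Finset.mem_sub.mpr ⟨a, ha, b, hb, rfl⟩
    have : a - b ∈ D := Finset.mem_erase.mpr ⟨sub_ne_zero.mpr hne, habA⟩
    rw [← hc] at this
    exact hvD c this
  rw [← hA]
  exact rhoMinus_le_of_injOn φ.toAddMonoidHom A hinj

/-- Lemma (independence of dimension): for a prime `p` and integers `d₁ > d₂ ≥ 0`, letting
`G = (ℤ/pℤ)^(d₁)` and `H = (ℤ/pℤ)^(d₂)`, we have `ρ⁻_G(r) = ρ⁻_H(r)` for `1 ≤ r ≤ p^(d₂)`. -/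
theorem rhoMinus_dimension_invariance (p : ℕ) [Fact p.Prime] (d₁ d₂ : ℕ) (hd : d₂ < d₁)
    (r : ℕ) (hr1 : 1 ≤ r) (hr2 : r ≤ p ^ d₂) :
    rhoMinus (Fin d₁ → ZMod p) r = rhoMinus (Fin d₂ → ZMod p) r := by
  have hp : 2 ≤ p := (Fact.out : p.Prime).two_le
  have hcard : ∀ e, d₂ ≤ e → r ≤ Fintype.card (Fin e → ZMod p) := by
    intro e he
    rw [card_pi_fin]
    exact le_trans hr2 (Nat.pow_le_pow_right (by omega) he)
  -- the easy direction for any e ≥ d₂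
  have easy : ∀ e, d₂ ≤ e → rhoMinus (Fin e → ZMod p) r ≤ rhoMinus (Fin d₂ → ZMod p) r := by
    intro e he
    exact rhoMinus_le_rhoMinus (extendZero p e d₂ he) (extendZero_injective p e d₂ he) r
      (hcard d₂ le_rfl)
  have hbound : rhoMinus (Fin d₂ → ZMod p) r ≤ p ^ d₂ := by
    have := rhoMinus_le_card (G := Fin d₂ → ZMod p) r (hcard d₂ le_rfl)
    rwa [card_pi_fin] at this
  -- main induction: for all e ≥ d₂, rhoMinus (Fin e) r = rhoMinus (Fin d₂) r
  have main : ∀ e, d₂ ≤ e → rhoMinus (Fin e → ZMod p) r = rhoMinus (Fin d₂ → ZMod p) r := by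
    intro e he
    induction e, he using Nat.le_induction with
    | base => rfl
    | succ n hn ih =>
      refine le_antisymm (easy (n + 1) (by omega)) ?_
      rw [← ih]
      obtain ⟨A, hAc, hAm⟩ := exists_rhoMinus_min (G := Fin (n + 1) → ZMod p) r
        (hcard (n + 1) (by omega))
      have hmle : (A - A).card ≤ p ^ n := by
        rw [hAm]
        calc rhoMinus (Fin (n + 1) → ZMod p) r ≤ rhoMinus (Fin d₂ → ZMod p) r :=
              easy (n + 1) (by omega)
          _ ≤ p ^ d₂ := hbound
          _ ≤ p ^ n := Nat.pow_le_pow_right (by omega) hn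
      have := step_down p n r A hAc hr1 hmle
      rw [hAm] at this
      exact this
  rw [main d₁ (le_of_lt hd)]
end

section
/- Let p be a prime, and let m and n be integers with n ≥ 1 and n + 2 ≤ m ≤ (p−1)/2. Let λ₁ ≥ λ₂ ≥ ⋯ ≥ λ_m be integers with p ≥ λ₁ and λ_m > 0 and λ₁ + ⋯ + λ_m ≥ np + 1. Let μ₁, …, μ_{2m−1} be integers such that μ_{i+j−1} ≥ min{λ_i + λ_j − 1, p} for all 1 ≤ i, j ≤ m. Then μ₁ + ⋯ + μ_{2m−1} ≥ (2n+1)p. -/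
set_option maxHeartbeats 1000000 in
/-- Lemma: let `p` be a prime, `n ≥ 1`, `n + 2 ≤ m ≤ (p-1)/2`. Let `p ≥ λ₁ ≥ ⋯ ≥ λ_m > 0` be
integers with `λ₁ + ⋯ + λ_m ≥ np + 1`, and let `μ₁, …, μ_{2m-1}` be integers with
`μ_{i+j-1} ≥ min {λ_i + λ_j - 1, p}` for `1 ≤ i, j ≤ m`. Then `μ₁ + ⋯ + μ_{2m-1} ≥ (2n+1)p`. -/
theorem sum_mu_ge (p : ℕ) (hp : p.Prime) (m n : ℕ) (hn : 1 ≤ n) (hnm : n + 2 ≤ m)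
    (hmp : m ≤ (p - 1) / 2)
    (lam : ℕ → ℤ)
    (hdec : ∀ i j : ℕ, 1 ≤ i → i ≤ j → j ≤ m → lam j ≤ lam i)
    (hlam1 : lam 1 ≤ (p : ℤ)) (hlamm : 0 < lam m)
    (hsum : (n : ℤ) * p + 1 ≤ ∑ k ∈ Finset.Icc 1 m, lam k)
    (mu : ℕ → ℤ)
    (hmu : ∀ i j : ℕ, 1 ≤ i → i ≤ m → 1 ≤ j → j ≤ m →
      min (lam i + lam j - 1) (p : ℤ) ≤ mu (i + j - 1)) :
    (2 * (n : ℤ) + 1) * p ≤ ∑ k ∈ Finset.Icc 1 (2 * m - 1), mu k := by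
  have hm3 : 3 ≤ m := by omega
  have hpm : 2 * m + 1 ≤ p := by have := hp.two_le; omega
  have hpmz : (2 * (m : ℤ) + 1) ≤ (p : ℤ) := by exact_mod_cast hpm
  set S : ℤ := ∑ k ∈ Finset.Icc 1 m, lam k with hSdef
  have hlam_ge1 : ∀ k, 1 ≤ k → k ≤ m → (1 : ℤ) ≤ lam k := by
    intro k h1 h2
    have := hdec k m h1 h2 le_rfl
    omega
  have hlam_le1 : ∀ k, 1 ≤ k → k ≤ m → lam k ≤ lam 1 := by
    intro k h1 h2
    exact hdec 1 k le_rfl h1 h2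
  -- sum of lam over Icc 2 m
  have hIcc1m : Finset.Icc 1 m = insert 1 (Finset.Icc 2 m) := by
    ext k; simp [Finset.mem_Icc, Finset.mem_insert]; omega
  have hsum2m : ∑ j ∈ Finset.Icc 2 m, lam j = S - lam 1 := by
    rw [hSdef, hIcc1m, Finset.sum_insert (by simp)]; ring
  -- split total sum
  have hsplit : ∑ k ∈ Finset.Icc 1 (2 * m - 1), mu k
      = (∑ k ∈ Finset.Icc 1 m, mu k) + ∑ k ∈ Finset.Icc (m + 1) (2 * m - 1), mu k := by
    have hu : Finset.Icc 1 (2 * m - 1) = Finset.Icc 1 m ∪ Finset.Icc (m + 1) (2 * m - 1) := by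
      ext k; simp [Finset.mem_Icc, Finset.mem_union]; omega
    rw [hu, Finset.sum_union]
    rw [Finset.disjoint_left]
    intro a ha hb
    simp [Finset.mem_Icc] at ha hb
    omega
  -- tail reindex
  have htail_eq : ∑ k ∈ Finset.Icc (m + 1) (2 * m - 1), mu k
      = ∑ j ∈ Finset.Icc 2 m, mu (m + j - 1) := by
    have himg : Finset.Icc (m + 1) (2 * m - 1) = (Finset.Icc 2 m).image (fun j => m + j - 1) := by
      ext k
      simp only [Finset.mem_image, Finset.mem_Icc]
      constructor
      · intro h; exact ⟨k - m + 1, by omega, by omega⟩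
      · rintro ⟨j, hj, rfl⟩; omega
    rw [himg, Finset.sum_image]
    intro a ha b hb hab
    simp [Finset.mem_Icc] at ha hb
    beta_reduce at hab
    omega
  -- tail lower bound, weak version (used in case B)
  have htailB : S - lam 1 ≤ ∑ k ∈ Finset.Icc (m + 1) (2 * m - 1), mu k := by
    rw [htail_eq, ← hsum2m]
    apply Finset.sum_le_sum
    intro j hj
    simp [Finset.mem_Icc] at hj
    refine le_trans ?_ (hmu m j (by omega) le_rfl (by omega) hj.2)
    apply le_min
    · have := hlam_ge1 m (by omega) le_rfl; linarith
    · exact le_trans (hlam_le1 j (by omega) hj.2) hlam1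
  rcases le_or_gt (2 * lam 1) (p : ℤ) with hsmall | hbig
  · -- Case A : 2 λ₁ ≤ p, no caps anywhere
    have hcap : ∀ i j, 1 ≤ i → i ≤ m → 1 ≤ j → j ≤ m → lam i + lam j - 1 ≤ mu (i + j - 1) := by
      intro i j h1 h2 h3 h4
      refine le_trans ?_ (hmu i j h1 h2 h3 h4)
      apply le_min le_rfl
      have := hlam_le1 i h1 h2
      have := hlam_le1 j h3 h4
      linarith
    -- E pairing value
    have hE : (m : ℤ) * (lam 1 - 1) + S + ((m : ℤ) - 1) * (lam m - 1) + (S - lam 1)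
        ≤ ∑ k ∈ Finset.Icc 1 (2 * m - 1), mu k := by
      rw [hsplit]
      have hfront : (m : ℤ) * (lam 1 - 1) + S ≤ ∑ k ∈ Finset.Icc 1 m, mu k := by
        have h1 : ∑ k ∈ Finset.Icc 1 m, (lam 1 - 1 + lam k) ≤ ∑ k ∈ Finset.Icc 1 m, mu k := by
          apply Finset.sum_le_sum
          intro k hk
          simp [Finset.mem_Icc] at hk
          have h := hcap k 1 hk.1 hk.2 le_rfl (by omega)
          have e : k + 1 - 1 = k := by omega
          rw [e] at h
          linarith
        rw [Finset.sum_add_distrib, Finset.sum_const, Nat.card_Icc] at h1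
        simpa [Nat.add_sub_cancel, nsmul_eq_mul] using h1
      have htailA : ((m : ℤ) - 1) * (lam m - 1) + (S - lam 1)
          ≤ ∑ k ∈ Finset.Icc (m + 1) (2 * m - 1), mu k := by
        rw [htail_eq]
        have h1 : ∑ j ∈ Finset.Icc 2 m, (lam m - 1 + lam j)
            ≤ ∑ j ∈ Finset.Icc 2 m, mu (m + j - 1) := by
          apply Finset.sum_le_sum
          intro j hj
          simp [Finset.mem_Icc] at hj
          have := hcap m j (by omega) le_rfl (by omega) hj.2
          linarith [this]
        rw [Finset.sum_add_distrib, Finset.sum_const, Nat.card_Icc, hsum2m] at h1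
        have hcard : (m + 1 - 2 : ℕ) = m - 1 := by omega
        rw [hcard] at h1
        have : ((m - 1 : ℕ) : ℤ) = (m : ℤ) - 1 := by rw [Nat.cast_sub (by omega : 1 ≤ m)]; norm_num
        rw [nsmul_eq_mul, this] at h1
        linarith
      linarith
    -- D pairing value
    have hD : 4 * S - lam 1 - lam m - (2 * (m : ℤ) - 1)
        ≤ ∑ k ∈ Finset.Icc 1 (2 * m - 1), mu k := by
      have hoe : ∑ k ∈ Finset.Icc 1 (2 * m - 1), mu k
          = (∑ i ∈ Finset.Icc 1 m, mu (2 * i - 1)) + ∑ i ∈ Finset.Icc 1 (m - 1), mu (2 * i) := by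
        have himg1 : ∀ (f : ℕ → ℤ), ∑ i ∈ Finset.Icc 1 m, f (2 * i - 1)
            = ∑ k ∈ (Finset.Icc 1 m).image (fun i => 2 * i - 1), f k := by
          intro f
          rw [Finset.sum_image]
          intro a ha b hb hab
          simp [Finset.mem_Icc] at ha hb
          beta_reduce at hab
          omega
        have himg2 : ∀ (f : ℕ → ℤ), ∑ i ∈ Finset.Icc 1 (m - 1), f (2 * i)
            = ∑ k ∈ (Finset.Icc 1 (m - 1)).image (fun i => 2 * i), f k := by
          intro f
          rw [Finset.sum_image]
          intro a ha b hb hab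
          beta_reduce at hab
          omega
        rw [himg1, himg2, ← Finset.sum_union]
        · congr 1
          ext k
          simp only [Finset.mem_union, Finset.mem_image, Finset.mem_Icc]
          constructor
          · intro hk
            rcases Nat.even_or_odd k with ⟨r, hr⟩ | ⟨r, hr⟩
            · right; exact ⟨r, by omega, by omega⟩
            · left; exact ⟨r + 1, by omega, by omega⟩
          · rintro (⟨i, hi, rfl⟩ | ⟨i, hi, rfl⟩) <;> omega
        · rw [Finset.disjoint_left]
          rintro a ha hb
          simp only [Finset.mem_image, Finset.mem_Icc] at ha hb
          obtain ⟨i, hi, rfl⟩ := ha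
          obtain ⟨j, hj, hji⟩ := hb
          omega
      rw [hoe]
      have hodd : 2 * S - (m : ℤ) ≤ ∑ i ∈ Finset.Icc 1 m, mu (2 * i - 1) := by
        have h1 : ∑ i ∈ Finset.Icc 1 m, (lam i + lam i - 1) ≤ ∑ i ∈ Finset.Icc 1 m, mu (2 * i - 1) := by
          apply Finset.sum_le_sum
          intro i hi
          simp [Finset.mem_Icc] at hi
          have h := hcap i i hi.1 hi.2 hi.1 hi.2
          have : 2 * i - 1 = i + i - 1 := by omega
          rw [this]; exact h
        have h2 : ∑ i ∈ Finset.Icc 1 m, (lam i + lam i - 1) = 2 * S - (m : ℤ) := by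
          rw [show (fun i => lam i + lam i - 1) = (fun i => lam i + (lam i + (-1))) from by funext i; ring]
          rw [Finset.sum_add_distrib, Finset.sum_add_distrib, Finset.sum_const, Nat.card_Icc]
          simp [hSdef]
          ring
        linarith
      have heven : 2 * S - lam 1 - lam m - ((m : ℤ) - 1) ≤ ∑ i ∈ Finset.Icc 1 (m - 1), mu (2 * i) := by
        have h1 : ∑ i ∈ Finset.Icc 1 (m - 1), (lam i + lam (i + 1) - 1)
            ≤ ∑ i ∈ Finset.Icc 1 (m - 1), mu (2 * i) := by
          apply Finset.sum_le_sum
          intro i hi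
          simp [Finset.mem_Icc] at hi
          have h := hcap i (i + 1) hi.1 (by omega) (by omega) (by omega)
          have : 2 * i = i + (i + 1) - 1 := by omega
          rw [this]; exact h
        have hA : ∑ i ∈ Finset.Icc 1 (m - 1), lam i = S - lam m := by
          have : Finset.Icc 1 m = insert m (Finset.Icc 1 (m - 1)) := by
            ext k; simp [Finset.mem_Icc, Finset.mem_insert]; omega
          rw [hSdef, this, Finset.sum_insert (by simp [Finset.mem_Icc]; omega)]
          ring
        have hB : ∑ i ∈ Finset.Icc 1 (m - 1), lam (i + 1) = S - lam 1 := by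
          rw [← hsum2m]
          rw [show Finset.Icc 2 m = (Finset.Icc 1 (m - 1)).image (fun i => i + 1) from ?_,
            Finset.sum_image (by intro a _ b _ h; beta_reduce at h; omega)]
          ext k
          simp only [Finset.mem_image, Finset.mem_Icc]
          constructor
          · intro h; exact ⟨k - 1, by omega, by omega⟩
          · rintro ⟨i, hi, rfl⟩; omega
        have h2 : ∑ i ∈ Finset.Icc 1 (m - 1), (lam i + lam (i + 1) - 1)
            = 2 * S - lam 1 - lam m - ((m : ℤ) - 1) := by
          rw [show (fun i => lam i + lam (i + 1) - 1) = (fun i => lam i + (lam (i + 1) + (-1))) from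
            by funext i; ring]
          rw [Finset.sum_add_distrib, Finset.sum_add_distrib, Finset.sum_const, Nat.card_Icc, hA, hB]
          have hc : (m - 1 + 1 - 1 : ℕ) = m - 1 := by omega
          rw [hc, nsmul_eq_mul]
          have : ((m - 1 : ℕ) : ℤ) = (m : ℤ) - 1 := by
            rw [Nat.cast_sub (by omega : 1 ≤ m)]; norm_num
          rw [this]; ring
        linarith
      linarith
    -- decide between D and E
    rcases le_or_gt ((2 * (n : ℤ) + 1) * p) (4 * S - lam 1 - lam m - (2 * (m : ℤ) - 1)) with h | h
    · linarith
    · -- D fails by at least 1, so E succeeds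
      have hx : 4 * S - 2 * (m : ℤ) + 2 - (2 * (n : ℤ) + 1) * p ≤ lam 1 + lam m := by linarith
      have hmz : (3 : ℤ) ≤ (m : ℤ) := by exact_mod_cast hm3
      have hnz : (1 : ℤ) ≤ (n : ℤ) := by exact_mod_cast hn
      have hnmz : (n : ℤ) + 2 ≤ (m : ℤ) := by exact_mod_cast hnm
      have hSz : (n : ℤ) * p + 1 ≤ S := hsum
      have hEval : (2 * (n : ℤ) + 1) * p
          ≤ (m : ℤ) * (lam 1 - 1) + S + ((m : ℤ) - 1) * (lam m - 1) + (S - lam 1) := by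
        have A1 : ((m:ℤ) - 1) * (4 * S - 2 * (m:ℤ) + 2 - (2 * (n:ℤ) + 1) * p)
            ≤ ((m:ℤ) - 1) * (lam 1 + lam m) :=
          mul_le_mul_of_nonneg_left hx (by linarith : (0:ℤ) ≤ (m:ℤ) - 1)
        have A2 : (0:ℤ) ≤ (4 * (m:ℤ) - 2) * (S - (n:ℤ) * p - 1) :=
          mul_nonneg (by linarith) (by linarith)
        have A3 : (0:ℤ) ≤ ((m:ℤ) - 2) * ((p:ℤ) - 2 * m - 1) :=
          mul_nonneg (by linarith) (by linarith)
        have A4 : (0:ℤ) ≤ (((n:ℤ) - 1) * ((m:ℤ) - 1)) * (p:ℤ) :=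
          mul_nonneg (mul_nonneg (by linarith) (by linarith)) (by positivity)
        nlinarith [A1, A2, A3, A4]
      linarith
  · -- Case B : 2 λ₁ ≥ p + 1
    classical
    set P : ℕ → Prop := fun k => (p : ℤ) + 1 ≤ lam 1 + lam k with hPdef
    set t : ℕ := Nat.findGreatest P m with htdef
    have hP1 : P 1 := by simp only [hPdef]; linarith
    have ht1 : 1 ≤ t := Nat.le_findGreatest (by omega) hP1
    have htm : t ≤ m := Nat.findGreatest_le m
    have hPt : P t := Nat.findGreatest_spec (by omega : 1 ≤ m) hP1
    have hgt : ∀ k, t < k → k ≤ m → lam 1 + lam k ≤ p := by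
      intro k hk hkm
      have := Nat.findGreatest_is_greatest (P := P) hk hkm
      simp only [hPdef] at this
      omega
    -- front split
    have hfsplit : ∑ k ∈ Finset.Icc 1 m, mu k
        = (∑ k ∈ Finset.Icc 1 t, mu k) + ∑ k ∈ Finset.Icc (t + 1) m, mu k := by
      have hu : Finset.Icc 1 m = Finset.Icc 1 t ∪ Finset.Icc (t + 1) m := by
        ext k; simp [Finset.mem_Icc, Finset.mem_union]; omega
      rw [hu, Finset.sum_union]
      rw [Finset.disjoint_left]
      intro a ha hb
      simp [Finset.mem_Icc] at ha hb
      omega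
    have hcapped : (t : ℤ) * p ≤ ∑ k ∈ Finset.Icc 1 t, mu k := by
      have h1 : ∑ k ∈ Finset.Icc 1 t, (p : ℤ) ≤ ∑ k ∈ Finset.Icc 1 t, mu k := by
        apply Finset.sum_le_sum
        intro k hk
        simp [Finset.mem_Icc] at hk
        refine le_trans ?_ (hmu k 1 hk.1 (by omega) le_rfl (by omega))
        apply le_min ?_ le_rfl
        have h2 : lam t ≤ lam k := hdec k t hk.1 hk.2 htm
        have h3 := hPt
        simp only [hPdef] at h3
        linarith
      rw [Finset.sum_const, Nat.card_Icc, nsmul_eq_mul] at h1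
      have : ((t + 1 - 1 : ℕ) : ℤ) = (t : ℤ) := by omega
      rw [this] at h1
      exact h1
    set R : ℤ := ∑ k ∈ Finset.Icc (t + 1) m, lam k with hRdef
    have hR0 : 0 ≤ R := by
      apply Finset.sum_nonneg
      intro k hk
      simp [Finset.mem_Icc] at hk
      linarith [hlam_ge1 k (by omega) hk.2]
    have hRS : S - (t : ℤ) * lam 1 ≤ R := by
      have hsplitS : S = (∑ k ∈ Finset.Icc 1 t, lam k) + R := by
        rw [hSdef, hRdef, ← Finset.sum_union]
        · congr 1
          ext k; simp [Finset.mem_Icc, Finset.mem_union]; omega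
        · rw [Finset.disjoint_left]
          intro a ha hb
          simp [Finset.mem_Icc] at ha hb
          omega
      have hle : ∑ k ∈ Finset.Icc 1 t, lam k ≤ (t : ℤ) * lam 1 := by
        have h1 : ∑ k ∈ Finset.Icc 1 t, lam k ≤ ∑ k ∈ Finset.Icc 1 t, lam 1 := by
          apply Finset.sum_le_sum
          intro k hk
          simp [Finset.mem_Icc] at hk
          exact hlam_le1 k hk.1 (le_trans hk.2 htm)
        rw [Finset.sum_const, Nat.card_Icc, nsmul_eq_mul] at h1
        have : ((t + 1 - 1 : ℕ) : ℤ) = (t : ℤ) := by omega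
        rw [this] at h1
        exact h1
      linarith
    have huncapped : ((m : ℤ) - t) * (lam 1 - 1) + R ≤ ∑ k ∈ Finset.Icc (t + 1) m, mu k := by
      have h1 : ∑ k ∈ Finset.Icc (t + 1) m, (lam 1 - 1 + lam k)
          ≤ ∑ k ∈ Finset.Icc (t + 1) m, mu k := by
        apply Finset.sum_le_sum
        intro k hk
        simp [Finset.mem_Icc] at hk
        refine le_trans ?_ (hmu k 1 (by omega) hk.2 le_rfl (by omega))
        apply le_min (by linarith) ?_
        have := hgt k (by omega) hk.2
        linarith
      rw [Finset.sum_add_distrib, Finset.sum_const, Nat.card_Icc, nsmul_eq_mul] at h1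
      have hc : ((m + 1 - (t + 1) : ℕ) : ℤ) = (m : ℤ) - t := by omega
      rw [hc, ← hRdef] at h1
      exact h1
    -- final arithmetic
    have hmz : (3 : ℤ) ≤ (m : ℤ) := by exact_mod_cast hm3
    have hnz : (1 : ℤ) ≤ (n : ℤ) := by exact_mod_cast hn
    have hnmz : (n : ℤ) + 2 ≤ (m : ℤ) := by exact_mod_cast hnm
    have hSz : (n : ℤ) * p + 1 ≤ S := hsum
    have ht1z : (1 : ℤ) ≤ (t : ℤ) := by exact_mod_cast ht1
    have htmz : (t : ℤ) ≤ (m : ℤ) := by exact_mod_cast htm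
    have hlam1pos : (1 : ℤ) ≤ lam 1 := hlam_ge1 1 le_rfl (by omega)
    have htotal : (t : ℤ) * p + (((m : ℤ) - t) * (lam 1 - 1) + R) + (S - lam 1)
        ≤ ∑ k ∈ Finset.Icc 1 (2 * m - 1), mu k := by
      rw [hsplit, hfsplit]
      linarith
    refine le_trans ?_ htotal
    rcases le_or_gt ((n : ℤ) + 1) (t : ℤ) with h1 | h1
    · rcases eq_or_lt_of_le htmz with h2 | h2
      · -- t = m
        have e1 : ((m:ℤ) - t) * (lam 1 - 1) = 0 := by rw [← h2]; ring
        have e2 : (0:ℤ) ≤ ((m:ℤ) - n - 2) * (p:ℤ) :=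
          mul_nonneg (by linarith) (by positivity)
        have e3 : (t:ℤ) * p = (m:ℤ) * p := by rw [h2]
        linarith [hR0, hSz, hlam1]
      · -- n+1 ≤ t ≤ m-1
        have e1 : (0:ℤ) ≤ ((t:ℤ) - n - 1) * (p:ℤ) := mul_nonneg (by linarith) (by positivity)
        have e2 : (0:ℤ) ≤ ((m:ℤ) - t - 1) * (lam 1 - 1) :=
          mul_nonneg (by linarith) (by linarith)
        nlinarith [e1, e2, hR0, hSz]
    · -- t ≤ n
      rcases le_or_gt ((t : ℤ) + 3) (m : ℤ) with h2 | h2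
      · have f1 : (0:ℤ) ≤ ((t:ℤ) - 1) * ((p:ℤ) - lam 1) :=
          mul_nonneg (by linarith) (by linarith)
        have f2 : (0:ℤ) ≤ ((m:ℤ) - t - 3) * (lam 1 - 1) :=
          mul_nonneg (by linarith) (by linarith)
        nlinarith [f1, f2, hRS, hSz, hlam1pos]
      · -- m = t + 2, so t = n
        have ht2 : (m : ℤ) = (t : ℤ) + 2 := by omega
        have htn : (t : ℤ) = (n : ℤ) := by omega
        have f1 : (0:ℤ) ≤ ((n:ℤ) - 1) * ((p:ℤ) - lam 1) :=
          mul_nonneg (by linarith) (by linarith)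
        have e3 : ((m:ℤ) - t) * (lam 1 - 1) = 2 * lam 1 - 2 := by rw [ht2]; ring
        have e4 : (t:ℤ) * p = (n:ℤ) * p := by rw [htn]
        have e5 : (t:ℤ) * lam 1 = (n:ℤ) * lam 1 := by rw [htn]
        nlinarith [f1, hRS, hSz, e3, e4, e5]
end

section
/- Let p be a prime and let m be an integer. Let G be a vector space over the finite field 𝔽_p of dimension d ≥ 3, and let S be a subset of G such that |S ∩ H| ≥ m·p^{d−2} for every vector subspace H ⊆ G of dimension d − 1. Then |S| ≥ m·p^{d−1}. -/
open Module Finset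

section Aux

variable {p : ℕ} [Fact p.Prime]

lemma modcard_aux (G : Type*) [AddCommGroup G] [Module (ZMod p) G]
    [FiniteDimensional (ZMod p) G] : Nat.card G = p ^ finrank (ZMod p) G := by
  haveI : Finite G := Finite.of_equiv _ (Module.finBasis (ZMod p) G).equivFun.symm.toEquiv
  haveI : Fintype G := Fintype.ofFinite G
  rw [Nat.card_eq_fintype_card, card_eq_pow_finrank (K := ZMod p), ZMod.card]

end Aux


/-- Lemma: let `p` be a prime, `m` an integer, and `G` an `𝔽_p`-vector space of dimension
`d ≥ 3`. If `S ⊆ G` satisfies `|S ∩ H| ≥ m p^(d-2)` for every vector hyperplane `H ⊆ G`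
(i.e. subspace of dimension `d - 1`), then `|S| ≥ m p^(d-1)`. -/
theorem ncard_ge_of_hyperplane_bound (p : ℕ) [Fact p.Prime] (m : ℤ) (d : ℕ) (hd : 3 ≤ d)
    (G : Type*) [AddCommGroup G] [Module (ZMod p) G] [FiniteDimensional (ZMod p) G]
    (hdim : Module.finrank (ZMod p) G = d)
    (S : Set G)
    (hS : ∀ H : Submodule (ZMod p) G, Module.finrank (ZMod p) H = d - 1 →
      m * (p : ℤ) ^ (d - 2) ≤ ((S ∩ (H : Set G)).ncard : ℤ)) :
    m * (p : ℤ) ^ (d - 1) ≤ (S.ncard : ℤ) := by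
  classical
  obtain ⟨k, rfl⟩ : ∃ k, d = k + 3 := ⟨d - 3, by omega⟩
  have e1 : k + 3 - 1 = k + 2 := by omega
  have e2 : k + 3 - 2 = k + 1 := by omega
  rw [e1]
  rcases le_or_gt m 0 with hm | hm
  · calc m * (p : ℤ) ^ (k + 2) ≤ 0 :=
        mul_nonpos_of_nonpos_of_nonneg hm (by positivity)
      _ ≤ _ := Int.natCast_nonneg _
  -- pass to ℕ
  set q : ℕ := m.toNat with hqdef
  have hmq : m = (q : ℤ) := (Int.toNat_of_nonneg hm.le).symm
  have hq1 : 1 ≤ q := by omega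
  have hp2 : 2 ≤ p := (Fact.out : p.Prime).two_le
  haveI : Finite G := Finite.of_equiv _ (Module.finBasis (ZMod p) G).equivFun.symm.toEquiv
  haveI : Fintype G := Fintype.ofFinite G
  set s : Finset G := S.toFinset with hsdef
  have hscard : S.ncard = s.card := by
    rw [hsdef, Set.ncard_eq_toFinset_card']
  -- intersection cards as filters
  have hfilter : ∀ T : Submodule (ZMod p) G,
      (S ∩ (T : Set G)).ncard = (s.filter (fun x => x ∈ T)).card := by
    intro T
    have : S ∩ (T : Set G) = ↑(s.filter (fun x => x ∈ T)) := by
      ext x; simp [hsdef, Set.mem_toFinset]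
    rw [this, Set.ncard_coe_finset]
  -- hypothesis in ℕ
  have hSnat : ∀ H : Submodule (ZMod p) G, finrank (ZMod p) H = k + 2 →
      q * p ^ (k + 1) ≤ (s.filter (fun x => x ∈ H)).card := by
    intro H hH
    have h1 := hS H (by omega)
    rw [e2, hmq, hfilter H] at h1
    exact_mod_cast h1
  rw [hmq]
  suffices h : q * p ^ (k + 2) ≤ s.card by
    rw [hscard]; exact_mod_cast h
  by_contra hcon
  push_neg at hcon
  -- the space of linear maps
  haveI : Finite (G →ₗ[ZMod p] ZMod p × ZMod p) :=
    Finite.of_equiv _ (Module.finBasis (ZMod p) _).equivFun.symm.toEquiv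
  haveI : Fintype (G →ₗ[ZMod p] ZMod p × ZMod p) := Fintype.ofFinite _
  have hrankE : finrank (ZMod p) (G →ₗ[ZMod p] ZMod p × ZMod p) = 2 * (k + 3) := by
    rw [Module.finrank_linearMap, hdim, Module.finrank_prod, finrank_self]
    ring
  have hcardE : Fintype.card (G →ₗ[ZMod p] ZMod p × ZMod p) = p ^ (2 * (k + 3)) := by
    rw [← Nat.card_eq_fintype_card, modcard_aux (p := p), hrankE]
  -- counting linear maps killing a fixed nonzero vector
  have hcount : ∀ x : G, x ≠ 0 →
      (univ.filter (fun f : G →ₗ[ZMod p] ZMod p × ZMod p => f x = 0)).card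
        = p ^ (2 * (k + 3) - 2) := by
    intro x hx
    set ev := LinearMap.applyₗ (R := ZMod p) (M₂ := ZMod p × ZMod p) x with hevdef
    have hsurj : Function.Surjective ev := by
      intro y
      have hinj : LinearMap.ker (LinearMap.toSpanSingleton (ZMod p) G x) = ⊥ :=
        LinearMap.ker_toSpanSingleton _ hx
      obtain ⟨φ, hφ⟩ :=
        (LinearMap.toSpanSingleton (ZMod p) G x).exists_leftInverse_of_injective hinj
      have hφx : φ x = 1 := by
        have := LinearMap.congr_fun hφ 1
        simpa [LinearMap.toSpanSingleton_apply] using this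
      exact ⟨φ.smulRight y, by show φ x • y = y; simp [hφx]⟩
    have hrk : finrank (ZMod p) (LinearMap.ker ev) = 2 * (k + 3) - 2 := by
      have h := LinearMap.finrank_range_add_finrank_ker ev
      rw [LinearMap.range_eq_top.mpr hsurj, finrank_top, Module.finrank_prod, finrank_self,
        hrankE] at h
      omega
    have hsetEq : (univ.filter (fun f : G →ₗ[ZMod p] ZMod p × ZMod p => f x = 0))
        = (univ.filter (fun f => f ∈ LinearMap.ker ev)) := by
      apply Finset.filter_congr
      intro f _
      exact Iff.rfl
    rw [hsetEq, ← Fintype.card_subtype, ← Nat.card_eq_fintype_card]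
    rw [show Nat.card {f // f ∈ LinearMap.ker ev} = Nat.card (LinearMap.ker ev) from rfl]
    rw [modcard_aux (p := p), hrk]
  -- double counting over f and x
  set s' : Finset G := s.erase 0 with hs'def
  have hdc : ∑ f : G →ₗ[ZMod p] ZMod p × ZMod p, (s'.filter (fun x => f x = 0)).card
      = s'.card * p ^ (2 * (k + 3) - 2) := by
    have h1 : ∑ f : G →ₗ[ZMod p] ZMod p × ZMod p, (s'.filter (fun x => f x = 0)).card
        = ∑ x ∈ s', (univ.filter (fun f : G →ₗ[ZMod p] ZMod p × ZMod p => f x = 0)).card := by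
      simp only [Finset.card_filter]
      exact Finset.sum_comm
    rw [h1]
    calc ∑ x ∈ s', (univ.filter (fun f : G →ₗ[ZMod p] ZMod p × ZMod p => f x = 0)).card
        = ∑ _x ∈ s', p ^ (2 * (k + 3) - 2) :=
          Finset.sum_congr rfl fun x hx => hcount x (ne_of_mem_erase hx)
      _ = s'.card * p ^ (2 * (k + 3) - 2) := by rw [Finset.sum_const, smul_eq_mul]
  -- find a good f₀
  obtain ⟨f₀, -, hf₀⟩ := Finset.exists_min_image (univ : Finset (G →ₗ[ZMod p] ZMod p × ZMod p))
    (fun f => (s'.filter (fun x => f x = 0)).card) ⟨0, mem_univ 0⟩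
  set t : ℕ := (s'.filter (fun x => f₀ x = 0)).card with htdef
  have htle : p ^ 2 * t ≤ s'.card := by
    have h1 : Fintype.card (G →ₗ[ZMod p] ZMod p × ZMod p) * t
        ≤ ∑ f : G →ₗ[ZMod p] ZMod p × ZMod p, (s'.filter (fun x => f x = 0)).card := by
      calc Fintype.card (G →ₗ[ZMod p] ZMod p × ZMod p) * t
          = ∑ _f : G →ₗ[ZMod p] ZMod p × ZMod p, t := by
            rw [Finset.sum_const, card_univ, smul_eq_mul]
        _ ≤ _ := Finset.sum_le_sum fun f _ => hf₀ f (mem_univ f)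
    rw [hdc, hcardE] at h1
    have h2 : p ^ (2 * (k + 3)) = p ^ (2 * (k + 3) - 2) * p ^ 2 := by
      have e4 : 2 * (k + 3) - 2 + 2 = 2 * (k + 3) := by omega
      rw [← pow_add, e4]
    rw [h2] at h1
    have h3 : p ^ (2 * (k + 3) - 2) * (p ^ 2 * t)
        ≤ p ^ (2 * (k + 3) - 2) * s'.card := by
      calc p ^ (2 * (k + 3) - 2) * (p ^ 2 * t)
          = p ^ (2 * (k + 3) - 2) * p ^ 2 * t := by ring
        _ ≤ s'.card * p ^ (2 * (k + 3) - 2) := h1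
        _ = p ^ (2 * (k + 3) - 2) * s'.card := by ring
    exact Nat.le_of_mul_le_mul_left h3 (by positivity)
  have ht : t + 1 ≤ q * p ^ k := by
    have h4 : p ^ 2 * t < p ^ 2 * (q * p ^ k) := by
      calc p ^ 2 * t ≤ s'.card := htle
        _ ≤ s.card := card_le_card (erase_subset _ _)
        _ < q * p ^ (k + 2) := hcon
        _ = p ^ 2 * (q * p ^ k) := by ring
    have := Nat.lt_of_mul_lt_mul_left h4
    omega
  -- the kernel of f₀ meets S in at most q * p ^ k points
  have hker : (s.filter (fun x => x ∈ LinearMap.ker f₀)).card ≤ q * p ^ k := by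
    have hsub : s.filter (fun x => x ∈ LinearMap.ker f₀)
        ⊆ insert 0 (s'.filter (fun x => f₀ x = 0)) := by
      intro x hx
      simp only [mem_filter, LinearMap.mem_ker] at hx
      rcases eq_or_ne x 0 with rfl | hx0
      · exact mem_insert_self _ _
      · exact mem_insert_of_mem (by simp [hs'def, mem_filter, mem_erase, hx0, hx.1, hx.2])
    calc (s.filter (fun x => x ∈ LinearMap.ker f₀)).card
        ≤ (insert 0 (s'.filter (fun x => f₀ x = 0))).card := card_le_card hsub
      _ ≤ t + 1 := by rw [htdef]; exact (card_insert_le _ _).trans (by omega)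
      _ ≤ q * p ^ k := ht
  -- f₀ is surjective
  have hsurj : LinearMap.range f₀ = ⊤ := by
    by_contra hne
    have hprod2 : finrank (ZMod p) (ZMod p × ZMod p) = 2 := by
      rw [Module.finrank_prod, finrank_self]
    have hlt : finrank (ZMod p) (LinearMap.range f₀) < 2 := by
      rw [← hprod2]
      exact Submodule.finrank_lt hne
    have hkge : k + 2 ≤ finrank (ZMod p) (LinearMap.ker f₀) := by
      have h := LinearMap.finrank_range_add_finrank_ker f₀
      rw [hdim] at h
      omega
    obtain ⟨v, hv⟩ := exists_linearIndependent_of_le_finrank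
      (R := ZMod p) (M := ↥(LinearMap.ker f₀)) (n := k + 2) hkge
    have hv2 : LinearIndependent (ZMod p) ((LinearMap.ker f₀).subtype ∘ v) :=
      hv.map' _ (Submodule.ker_subtype _)
    set W : Submodule (ZMod p) G :=
      Submodule.span (ZMod p) (Set.range ((LinearMap.ker f₀).subtype ∘ v)) with hWdef
    have hWrank : finrank (ZMod p) W = k + 2 := by
      rw [hWdef, finrank_span_eq_card hv2, Fintype.card_fin]
    have hWle : W ≤ LinearMap.ker f₀ := by
      rw [hWdef, Submodule.span_le]
      rintro _ ⟨i, rfl⟩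
      exact (v i).2
    have hmono : (s.filter (fun x => x ∈ W)).card
        ≤ (s.filter (fun x => x ∈ LinearMap.ker f₀)).card :=
      card_le_card (Finset.monotone_filter_right s (fun x _ hx => hWle hx))
    have hbig := (hSnat W hWrank).trans (hmono.trans hker)
    have hfac : q * (p * p ^ k) ≤ q * p ^ k := by
      calc q * (p * p ^ k) = q * p ^ (k + 1) := by ring
        _ ≤ q * p ^ k := hbig
    have h6 : p * p ^ k ≤ p ^ k := Nat.le_of_mul_le_mul_left hfac (by omega)
    have hp0 : 0 < p ^ k := pow_pos (by omega) k
    have h7 : 2 * p ^ k ≤ p * p ^ k := Nat.mul_le_mul_right _ hp2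
    omega
  -- finrank of the kernel
  have hkerrank : finrank (ZMod p) (LinearMap.ker f₀) = k + 1 := by
    have h := LinearMap.finrank_range_add_finrank_ker f₀
    rw [hsurj, finrank_top, hdim, Module.finrank_prod, finrank_self] at h
    omega
  -- the p+1 hyperplanes through ker f₀
  set w : Option (ZMod p) → ZMod p × ZMod p :=
    fun i => Option.elim i (1, 0) (fun a => (a, 1)) with hwdef
  have hw : ∀ i, w i ≠ 0 := by
    rintro (_ | a) h <;> simp [hwdef, Prod.ext_iff] at h
  set H : Option (ZMod p) → Submodule (ZMod p) G :=
    fun i => Submodule.comap f₀ (Submodule.span (ZMod p) {w i}) with hHdef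
  have hHrank : ∀ i, finrank (ZMod p) (H i) = k + 2 := by
    intro i
    have hmem : ∀ x : G, x ∈ H i → f₀ x ∈ Submodule.span (ZMod p) {w i} := fun x hx => hx
    have hgker : finrank (ZMod p) (LinearMap.ker (f₀.restrict hmem)) = k + 1 := by
      rw [LinearMap.ker_restrict hmem]
      have hle2 : LinearMap.ker f₀ ≤ H i := by
        intro x hx
        have : f₀ x = 0 := hx
        simp [hHdef, Submodule.mem_comap, this]
      rw [(Submodule.comapSubtypeEquivOfLe hle2).finrank_eq, hkerrank]
    have hgsurj : LinearMap.range (f₀.restrict hmem) = ⊤ := by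
      rw [LinearMap.range_eq_top]
      rintro ⟨y, hy⟩
      obtain ⟨x, rfl⟩ := LinearMap.range_eq_top.mp hsurj y
      exact ⟨⟨x, hy⟩, rfl⟩
    have h := LinearMap.finrank_range_add_finrank_ker (f₀.restrict hmem)
    rw [hgsurj, finrank_top, finrank_span_singleton (hw i), hgker] at h
    omega
  -- every x with f₀ x ≠ 0 is in at most one H i
  have hone : ∀ x : G, f₀ x ≠ 0 →
      (univ.filter (fun i : Option (ZMod p) => x ∈ H i)).card ≤ 1 := by
    intro x hx
    rw [Finset.card_le_one]
    intro i hi j hj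
    simp only [mem_filter, mem_univ, true_and, hHdef, Submodule.mem_comap,
      Submodule.mem_span_singleton] at hi hj
    obtain ⟨c, hc⟩ := hi
    obtain ⟨e, he⟩ := hj
    rcases i with _ | a <;> rcases j with _ | b <;>
      simp only [hwdef, Option.elim_none, Option.elim_some, Prod.smul_mk, smul_eq_mul,
        mul_one, mul_zero] at hc he
    · rfl
    · exfalso
      have key := hc.trans he.symm
      rw [Prod.mk.injEq] at key
      apply hx
      rw [← he, ← key.2, zero_mul]
      rfl
    · exfalso
      have key := hc.trans he.symm
      rw [Prod.mk.injEq] at key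
      apply hx
      rw [← hc, key.2, zero_mul]
      rfl
    · have key := hc.trans he.symm
      rw [Prod.mk.injEq] at key
      have hc0 : c ≠ 0 := by
        rintro rfl
        apply hx
        rw [← hc, zero_mul]
        rfl
      have hce : c = e := key.2
      have : c * a = c * b := by rw [key.1, hce]
      rw [mul_left_cancel₀ hc0 this]
  have hall : ∀ x : G, (univ.filter (fun i : Option (ZMod p) => x ∈ H i)).card ≤ p + 1 := by
    intro x
    calc (univ.filter (fun i : Option (ZMod p) => x ∈ H i)).card
        ≤ (univ : Finset (Option (ZMod p))).card := card_filter_le _ _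
      _ = p + 1 := by rw [card_univ, Fintype.card_option, ZMod.card]
  -- the key double counting
  have hsum : ∑ i : Option (ZMod p), (s.filter (fun x => x ∈ H i)).card
      ≤ s.card + p * (q * p ^ k) := by
    have h1 : ∑ i : Option (ZMod p), (s.filter (fun x => x ∈ H i)).card
        = ∑ x ∈ s, (univ.filter (fun i : Option (ZMod p) => x ∈ H i)).card := by
      simp only [Finset.card_filter]
      exact Finset.sum_comm
    rw [h1]
    have h2 : ∀ x ∈ s, (univ.filter (fun i : Option (ZMod p) => x ∈ H i)).card
        ≤ 1 + (if x ∈ LinearMap.ker f₀ then p else 0) := by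
      intro x hx
      by_cases hx0 : x ∈ LinearMap.ker f₀
      · simp only [hx0, if_true]
        exact (hall x).trans (by omega)
      · simp only [hx0, if_false]
        have hfx : f₀ x ≠ 0 := by simpa [LinearMap.mem_ker] using hx0
        simpa using hone x hfx
    calc ∑ x ∈ s, (univ.filter (fun i : Option (ZMod p) => x ∈ H i)).card
        ≤ ∑ x ∈ s, (1 + if x ∈ LinearMap.ker f₀ then p else 0) := Finset.sum_le_sum h2
      _ = s.card + p * (s.filter (fun x => x ∈ LinearMap.ker f₀)).card := by
          rw [Finset.sum_add_distrib, Finset.sum_const, smul_eq_mul, mul_one,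
            ← Finset.sum_filter, Finset.sum_const, smul_eq_mul, mul_comm]
      _ ≤ s.card + p * (q * p ^ k) := by
          have := hker
          exact Nat.add_le_add_left (Nat.mul_le_mul_left p hker) _
  -- lower bound on the sum
  have hlow : (p + 1) * (q * p ^ (k + 1))
      ≤ ∑ i : Option (ZMod p), (s.filter (fun x => x ∈ H i)).card := by
    calc (p + 1) * (q * p ^ (k + 1))
        = ∑ _i : Option (ZMod p), q * p ^ (k + 1) := by
          rw [Finset.sum_const, card_univ, Fintype.card_option, ZMod.card, smul_eq_mul]
      _ ≤ _ := Finset.sum_le_sum fun i _ => hSnat (H i) (hHrank i)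
  -- contradiction
  have h5 : (p + 1) * (q * p ^ (k + 1)) ≤ s.card + p * (q * p ^ k) := hlow.trans hsum
  have e3 : (p + 1) * (q * p ^ (k + 1)) = q * p ^ (k + 2) + p * (q * p ^ k) := by ring
  rw [e3] at h5
  have := le_of_add_le_add_right h5
  omega
end

section
/- Let G be a finite abelian group of order N and let m be an integer with 1 ≤ m ≤ N/2. Then ρ_±(G, m, 2) ≥ min{ρ_G⁻(m), ρ_G⁻(2m) − 1}. -/
open Pointwise

lemma sub_mem_aux {G : Type*} [AddCommGroup G] [DecidableEq G] {A : Finset G}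
    {a b : G} (ha : a ∈ A) (hb : b ∈ A) :
    a - b ∈ insert (0:G) (signedSumset2 A) := by
  by_cases hab : a = b
  · subst hab; simp
  · refine Finset.mem_insert_of_mem ?_
    exact Finset.mem_union_right _
      (Finset.mem_image.mpr ⟨(a, b), Finset.mem_offDiag.mpr ⟨ha, hb, hab⟩, rfl⟩)

/-- Lemma: for a finite abelian group `G` of order `N` and `1 ≤ m ≤ N/2`,
`ρ±(G, m, 2) ≥ min {ρ⁻_G(m), ρ⁻_G(2m) - 1}`. -/
theorem rhoPM_ge_min {G : Type*} [AddCommGroup G] [Fintype G] [DecidableEq G]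
    (N : ℕ) (hN : N = Fintype.card G) (m : ℕ) (hm1 : 1 ≤ m) (hm2 : 2 * m ≤ N) :
    min (rhoMinus G m) (rhoMinus G (2 * m) - 1) ≤ rhoPM G m := by
  subst hN
  apply le_csInf
  · obtain ⟨A, -, hAcard⟩ :=
      Finset.exists_subset_card_eq (s := (Finset.univ : Finset G)) (n := m)
        (by rw [Finset.card_univ]; omega)
    exact ⟨_, A, hAcard, rfl⟩
  · rintro n ⟨A, hAm, rfl⟩
    by_cases h0 : (0:G) ∈ A + A
    · refine le_trans (min_le_left _ _) (le_trans (Nat.sInf_le ⟨A, hAm, rfl⟩) ?_)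
      apply Finset.card_le_card
      intro x hx
      rw [Finset.mem_sub] at hx
      obtain ⟨a, ha, b, hb, rfl⟩ := hx
      by_cases hab : a = b
      · subst hab
        rw [sub_self]
        exact Finset.mem_union_left _ (Finset.mem_union_left _ h0)
      · exact Finset.mem_union_right _
          (Finset.mem_image.mpr ⟨(a, b), Finset.mem_offDiag.mpr ⟨ha, hb, hab⟩, rfl⟩)
    · set B := A ∪ -A with hB
      have hdisj : Disjoint A (-A) := by
        rw [Finset.disjoint_left]
        intro a ha hna
        rw [Finset.mem_neg] at hna
        obtain ⟨b, hb, hba⟩ := hna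
        exact h0 (Finset.mem_add.mpr ⟨b, hb, a, ha, by rw [← hba, add_neg_cancel]⟩)
      have hBcard : B.card = 2 * m := by
        rw [hB, Finset.card_union_of_disjoint hdisj, Finset.card_neg, hAm]; ring
      have hsub : B - B ⊆ insert (0:G) (signedSumset2 A) := by
        intro x hx
        rw [Finset.mem_sub] at hx
        obtain ⟨a, ha, b, hb, rfl⟩ := hx
        rw [hB, Finset.mem_union] at ha hb
        rcases ha with ha | ha <;> rcases hb with hb | hb
        · exact sub_mem_aux ha hb
        · rw [Finset.mem_neg] at hb
          obtain ⟨b', hb', rfl⟩ := hb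
          refine Finset.mem_insert_of_mem (Finset.mem_union_left _ (Finset.mem_union_left _ ?_))
          exact Finset.mem_add.mpr ⟨a, ha, b', hb', by abel⟩
        · rw [Finset.mem_neg] at ha
          obtain ⟨a', ha', rfl⟩ := ha
          refine Finset.mem_insert_of_mem (Finset.mem_union_left _ (Finset.mem_union_right _ ?_))
          rw [Finset.mem_neg]
          exact ⟨a' + b, Finset.mem_add.mpr ⟨a', ha', b, hb, rfl⟩, by abel⟩
        · rw [Finset.mem_neg] at ha hb
          obtain ⟨a', ha', rfl⟩ := ha
          obtain ⟨b', hb', rfl⟩ := hb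
          have : -a' - -b' = b' - a' := by abel
          rw [this]
          exact sub_mem_aux hb' ha'
      have h1 : rhoMinus G (2 * m) ≤ (B - B).card := Nat.sInf_le ⟨B, hBcard, rfl⟩
      have h2 : (B - B).card ≤ (signedSumset2 A).card + 1 :=
        le_trans (Finset.card_le_card hsub) (Finset.card_insert_le _ _)
      exact le_trans (min_le_right _ _) (by omega)
end

section
/- Let m > 1 be an integer, and let λ₁ ≥ λ₂ ≥ ⋯ ≥ λ_m be integers with λ_m > 0 and λ₁ > 1. Define μ_k = max{λ_i + λ_j − 1 : 1 ≤ i, j ≤ m, i + j − 1 = k} for 1 ≤ k ≤ 2m − 1. Then μ₁ + ⋯ + μ_{2m−1} ≥ 3(λ₁ + ⋯ + λ_m) − 3. -/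
open Finset

private lemma sum_split' (f : ℕ → ℤ) (a b c : ℕ) (hab : a ≤ b) (hbc : b ≤ c) :
    ∑ k ∈ Finset.Ico a c, f k = (∑ k ∈ Finset.Ico a b, f k) + ∑ k ∈ Finset.Ico b c, f k :=
  (Finset.sum_Ico_consecutive f hab hbc).symm

private lemma sum_one' (f : ℕ → ℤ) (a : ℕ) : ∑ k ∈ Finset.Ico a (a+1), f k = f a := by
  simp

private lemma sum_two' (f : ℕ → ℤ) (a : ℕ) :
    ∑ k ∈ Finset.Ico a (a+2), f k = f a + f (a+1) := by
  rw [Finset.sum_Ico_eq_sum_range]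
  simp [Finset.sum_range_succ]

private lemma icc_eq_ico (a b : ℕ) (_h : 1 ≤ b) : Finset.Icc a b = Finset.Ico a (b+1) :=
  (Finset.Ico_add_one_right_eq_Icc a b).symm

private lemma auxA (m : ℕ) : 2 ≤ m → ∀ lam ν : ℕ → ℤ,
    (∀ i j : ℕ, 1 ≤ i → i ≤ j → j ≤ m → lam j ≤ lam i) →
    (1 ≤ lam m) → (2 ≤ lam 1) →
    (∀ i j : ℕ, 1 ≤ i → i ≤ m → 1 ≤ j → j ≤ m → lam i + lam j - 1 ≤ ν (i + j - 1)) →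
    3 * (∑ k ∈ Finset.Icc 1 m, lam k) - 3 ≤ ∑ k ∈ Finset.Icc 1 (2 * m - 1), ν k := by
  induction m using Nat.strong_induction_on with
  | _ m IH =>
    intro hm lam ν hdec hlamm hlam1 hν
    by_cases hA : 2 ≤ lam m
    · rcases eq_or_lt_of_le hm with h2 | h3
      · -- m = 2
        subst h2
        have b11 := hν 1 1 (by norm_num) (by norm_num) (by norm_num) (by norm_num)
        have b12 := hν 1 2 (by norm_num) (by norm_num) (by norm_num) (by norm_num)
        have b22 := hν 2 2 (by norm_num) (by norm_num) (by norm_num) (by norm_num)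
        norm_num at b11 b12 b22
        rw [show (Finset.Icc 1 (2*2-1) : Finset ℕ) = {1,2,3} by decide,
            show (Finset.Icc 1 2 : Finset ℕ) = {1,2} by decide,
            Finset.sum_insert (by decide : (1:ℕ) ∉ ({2,3} : Finset ℕ)),
            Finset.sum_pair (by decide : (2:ℕ) ≠ 3),
            Finset.sum_pair (by decide : (1:ℕ) ≠ 2)]
        linarith
      · -- m ≥ 3, induct to m-1
        have hm3 : 3 ≤ m := h3
        have hd := hdec (m-1) m (by omega) (by omega) le_rfl
        have hIH := IH (m - 1) (by omega) (by omega) lam ν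
          (fun i j hi hij hj => hdec i j hi hij (by omega))
          (by linarith)
          hlam1
          (fun i j hi hi' hj hj' => hν i j hi (by omega) hj (by omega))
        rw [icc_eq_ico 1 (2*(m-1)-1) (by omega), icc_eq_ico 1 (m-1) (by omega)] at hIH
        rw [icc_eq_ico 1 (2*m-1) (by omega), icc_eq_ico 1 m (by omega)]
        rw [show 2*m-1+1 = 2*m by omega,
            sum_split' ν 1 (2*m-2) (2*m) (by omega) (by omega),
            sum_split' lam 1 m (m+1) (by omega) (by omega)]
        rw [show 2*(m-1)-1+1 = 2*m-2 by omega, show m-1+1 = m by omega] at hIH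
        have hν2 : ∑ k ∈ Finset.Ico (2*m-2) (2*m), ν k = ν (2*m-2) + ν (2*m-1) := by
          have h := sum_two' ν (2*m-2)
          rw [show 2*m-2+2 = 2*m by omega, show 2*m-2+1 = 2*m-1 by omega] at h
          exact h
        have hl2 : ∑ k ∈ Finset.Ico m (m+1), lam k = lam m := sum_one' lam m
        have b1 := hν (m-1) m (by omega) (by omega) (by omega) le_rfl
        rw [show m-1+m-1 = 2*m-2 by omega] at b1
        have b2 := hν m m (by omega) le_rfl (by omega) le_rfl
        rw [show m+m-1 = 2*m-1 by omega] at b2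
        rw [hν2, hl2]
        linarith
    · -- lam m = 1
      have hm1 : lam m = 1 := by omega
      by_cases hB : 2 ≤ lam 2
      · -- p = max index with lam p ≥ 2; 2 ≤ p < m
        have hPne : ((Finset.Icc 1 m).filter (fun t => 2 ≤ lam t)).Nonempty := by
          refine ⟨2, ?_⟩
          rw [Finset.mem_filter, Finset.mem_Icc]
          exact ⟨⟨by omega, by omega⟩, hB⟩
        obtain ⟨p, hp2, hpm', hlamp, hone⟩ :
            ∃ p, 2 ≤ p ∧ p ≤ m ∧ 2 ≤ lam p ∧ (∀ t, p < t → t ≤ m → lam t = 1) := by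
          set P := (Finset.Icc 1 m).filter (fun t => 2 ≤ lam t)
          have h2P : 2 ∈ P := by
            rw [Finset.mem_filter, Finset.mem_Icc]
            exact ⟨⟨by omega, by omega⟩, hB⟩
          have hmem := P.max'_mem hPne
          rw [Finset.mem_filter, Finset.mem_Icc] at hmem
          refine ⟨P.max' hPne, Finset.le_max' P 2 h2P, hmem.1.2, hmem.2, ?_⟩
          intro t hpt htm
          have hge := hdec t m (by omega) htm le_rfl
          by_contra hcon
          have : t ∈ P := by
            rw [Finset.mem_filter, Finset.mem_Icc]
            exact ⟨⟨by omega, htm⟩, by omega⟩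
          have := Finset.le_max' P t this
          omega
        have hpm : p < m := by
          rcases lt_or_eq_of_le hpm' with h | h
          · exact h
          · exfalso; rw [h] at hlamp; omega
        have hIH := IH p (by omega) (by omega) lam ν
          (fun i j hi hij hj => hdec i j hi hij (by omega))
          (by linarith [hlamp])
          hlam1
          (fun i j hi hi' hj hj' => hν i j hi (by omega) hj (by omega))
        rw [icc_eq_ico 1 (2*p-1) (by omega), icc_eq_ico 1 p (by omega)] at hIH
        rw [show 2*p-1+1 = 2*p by omega] at hIH
        rw [icc_eq_ico 1 (2*m-1) (by omega), icc_eq_ico 1 m (by omega)]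
        rw [show 2*m-1+1 = 2*m by omega,
            sum_split' ν 1 (2*p) (2*m) (by omega) (by omega),
            sum_split' ν (2*p) (m+p) (2*m) (by omega) (by omega),
            sum_split' lam 1 (p+1) (m+1) (by omega) (by omega)]
        -- lam sum on the tail is all ones
        have hsl : ∑ k ∈ Finset.Ico (p+1) (m+1), lam k = (m : ℤ) - (p : ℤ) := by
          have hcon : ∑ k ∈ Finset.Ico (p+1) (m+1), lam k
              = ∑ k ∈ Finset.Ico (p+1) (m+1), (1:ℤ) :=
            Finset.sum_congr rfl (fun k hk => by
              rw [Finset.mem_Ico] at hk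
              exact hone k (by omega) (by omega))
          rw [hcon, Finset.sum_const, Nat.card_Ico, nsmul_eq_mul, mul_one]
          omega
        -- block 2: each term ≥ 2
        have hb2 : ∀ k ∈ Finset.Ico (2*p) (m+p), (2:ℤ) ≤ ν k := by
          intro k hk
          rw [Finset.mem_Ico] at hk
          have h := hν p (k+1-p) (by omega) (by omega) (by omega) (by omega)
          rw [show p+(k+1-p)-1 = k by omega] at h
          have h1 := hone (k+1-p) (by omega) (by omega)
          omega
        have hB2 := Finset.card_nsmul_le_sum (Finset.Ico (2*p) (m+p)) ν 2 hb2
        rw [Nat.card_Ico, nsmul_eq_mul] at hB2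
        have hc2 : ((m+p-2*p : ℕ) : ℤ) = (m : ℤ) - (p : ℤ) := by omega
        rw [hc2] at hB2
        -- block 3: each term ≥ 1
        have hb3 : ∀ k ∈ Finset.Ico (m+p) (2*m), (1:ℤ) ≤ ν k := by
          intro k hk
          rw [Finset.mem_Ico] at hk
          have h := hν (k+1-m) m (by omega) (by omega) (by omega) le_rfl
          rw [show k+1-m+m-1 = k by omega] at h
          have h1 := hone (k+1-m) (by omega) (by omega)
          omega
        have hB3 := Finset.card_nsmul_le_sum (Finset.Ico (m+p) (2*m)) ν 1 hb3
        rw [Nat.card_Ico, nsmul_eq_mul] at hB3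
        have hc3 : ((2*m-(m+p) : ℕ) : ℤ) = (m : ℤ) - (p : ℤ) := by omega
        rw [hc3] at hB3
        rw [hsl]
        linarith
      · -- lam t = 1 for all t ≥ 2
        have hones : ∀ t, 2 ≤ t → t ≤ m → lam t = 1 := by
          intro t h2 hm'
          have h1 := hdec 2 t (by omega) h2 hm'
          have h2' := hdec t m (by omega) hm' le_rfl
          omega
        rw [icc_eq_ico 1 (2*m-1) (by omega), icc_eq_ico 1 m (by omega)]
        rw [show 2*m-1+1 = 2*m by omega,
            sum_split' ν 1 2 (2*m) (by omega) (by omega),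
            sum_split' ν 2 (m+1) (2*m) (by omega) (by omega),
            sum_split' lam 1 2 (m+1) (by omega) (by omega)]
        have hν1 : ∑ k ∈ Finset.Ico 1 2, ν k = ν 1 := sum_one' ν 1
        have hl1 : ∑ k ∈ Finset.Ico 1 2, lam k = lam 1 := sum_one' lam 1
        have hsl : ∑ k ∈ Finset.Ico 2 (m+1), lam k = (m : ℤ) - 1 := by
          have hcon : ∑ k ∈ Finset.Ico 2 (m+1), lam k
              = ∑ k ∈ Finset.Ico 2 (m+1), (1:ℤ) :=
            Finset.sum_congr rfl (fun k hk => by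
              rw [Finset.mem_Ico] at hk
              exact hones k (by omega) (by omega))
          rw [hcon, Finset.sum_const, Nat.card_Ico, nsmul_eq_mul, mul_one]
          omega
        have b11 := hν 1 1 (by norm_num) (by omega) (by norm_num) (by omega)
        norm_num at b11
        have hb2 : ∀ k ∈ Finset.Ico 2 (m+1), lam 1 ≤ ν k := by
          intro k hk
          rw [Finset.mem_Ico] at hk
          have h := hν 1 k (by omega) (by omega) (by omega) (by omega)
          rw [show 1+k-1 = k by omega] at h
          have h1 := hones k (by omega) (by omega)
          omega
        have hB2 := Finset.card_nsmul_le_sum (Finset.Ico 2 (m+1)) ν (lam 1) hb2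
        rw [Nat.card_Ico, nsmul_eq_mul] at hB2
        have hc2 : ((m+1-2 : ℕ) : ℤ) = (m : ℤ) - 1 := by omega
        rw [hc2] at hB2
        have hb3 : ∀ k ∈ Finset.Ico (m+1) (2*m), (1:ℤ) ≤ ν k := by
          intro k hk
          rw [Finset.mem_Ico] at hk
          have h := hν (k+1-m) m (by omega) (by omega) (by omega) le_rfl
          rw [show k+1-m+m-1 = k by omega] at h
          have h1 := hones (k+1-m) (by omega) (by omega)
          omega
        have hB3 := Finset.card_nsmul_le_sum (Finset.Ico (m+1) (2*m)) ν 1 hb3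
        rw [Nat.card_Ico, nsmul_eq_mul] at hB3
        have hc3 : ((2*m-(m+1) : ℕ) : ℤ) = (m : ℤ) - 1 := by omega
        rw [hc3] at hB3
        rw [hν1, hl1, hsl]
        have hmc : (2:ℤ) ≤ (m:ℤ) := by exact_mod_cast hm
        nlinarith [mul_nonneg (by linarith : (0:ℤ) ≤ (m:ℤ) - 2)
          (by linarith : (0:ℤ) ≤ lam 1 - 2)]

/-- Lemma: let `m > 1` and `λ₁ ≥ ⋯ ≥ λ_m > 0` be integers with `λ₁ > 1`. Define
`μ_k = max {λ_i + λ_j - 1 | 1 ≤ i, j ≤ m, i + j - 1 = k}` for `1 ≤ k ≤ 2m - 1`. Then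
`μ₁ + ⋯ + μ_{2m-1} ≥ 3(λ₁ + ⋯ + λ_m) - 3`. -/
theorem sum_mu_ge_three_sum (m : ℕ) (hm : 1 < m)
    (lam : ℕ → ℤ)
    (hdec : ∀ i j : ℕ, 1 ≤ i → i ≤ j → j ≤ m → lam j ≤ lam i)
    (hlamm : 0 < lam m) (hlam1 : 1 < lam 1)
    (mu : ℕ → ℤ)
    (hmu : ∀ k : ℕ, 1 ≤ k → k ≤ 2 * m - 1 →
      IsGreatest {v : ℤ | ∃ i j : ℕ, 1 ≤ i ∧ i ≤ m ∧ 1 ≤ j ∧ j ≤ m ∧ i + j - 1 = k ∧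
        v = lam i + lam j - 1} (mu k)) :
    3 * (∑ k ∈ Finset.Icc 1 m, lam k) - 3 ≤ ∑ k ∈ Finset.Icc 1 (2 * m - 1), mu k := by
  refine auxA m hm lam mu hdec (by omega) (by omega) ?_
  intro i j hi hi' hj hj'
  exact (hmu (i + j - 1) (by omega) (by omega)).2 ⟨i, j, hi, hi', hj, hj', rfl, rfl⟩
end

section
/- Let G be a finite abelian group of order N, let d be a positive divisor of N, let H be a subgroup of G of order d, and suppose the quotient G/H is cyclic with x ∈ G an element whose image generates G/H. For an integer r with 1 ≤ r ≤ N, let A = ⋃_{i=0}^{⌈r/d⌉−1} (H + i·x). Then |A| = d·⌈r/d⌉ ≥ r and A − A = ⋃_{i=1−⌈r/d⌉}^{⌈r/d⌉−1} (H + i·x), so that |A − A| ≤ d·(2·⌈r/d⌉ − 1). -/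
open Pointwise

private lemma ncard_biUnion_eq {ι G : Type*} [Fintype G] (s : Finset ι) (f : ι → Set G)
    (h : ∀ i ∈ s, ∀ j ∈ s, i ≠ j → Disjoint (f i) (f j)) :
    (⋃ i ∈ s, f i).ncard = ∑ i ∈ s, (f i).ncard := by
  classical
  induction s using Finset.induction with
  | empty => simp
  | @insert a s ha ih =>
    rw [Finset.set_biUnion_insert, Set.ncard_union_eq, Finset.sum_insert ha,
      ih (fun i hi j hj hij => h i (Finset.mem_insert_of_mem hi) j (Finset.mem_insert_of_mem hj) hij)]
    · exact Set.disjoint_iUnion₂_right.2 fun i hi =>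
        h a (Finset.mem_insert_self a s) i (Finset.mem_insert_of_mem hi)
          (fun he => ha (he ▸ hi))

private lemma ncard_biUnion_le {ι G : Type*} [Fintype G] (s : Finset ι) (f : ι → Set G) :
    (⋃ i ∈ s, f i).ncard ≤ ∑ i ∈ s, (f i).ncard := by
  classical
  induction s using Finset.induction with
  | empty => simp
  | @insert a s ha ih =>
    rw [Finset.set_biUnion_insert, Finset.sum_insert ha]
    exact le_trans (Set.ncard_union_le _ _) (by omega)

/-- The coset construction in the proof of the cyclic case: let `G` be a finite abelian group of
order `N`, `d` a positive divisor of `N`, `H` a subgroup of `G` of order `d` such that `G/H` is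
cyclic, generated by the image of `x ∈ G`. For `1 ≤ r ≤ N`, let
`A = ⋃_{i=0}^{⌈r/d⌉-1} (H + i•x)`. Then `|A| = d⌈r/d⌉ ≥ r`,
`A - A = ⋃_{i=1-⌈r/d⌉}^{⌈r/d⌉-1} (H + i•x)`, and `|A - A| ≤ d(2⌈r/d⌉ - 1)`. -/
theorem coset_progression {G : Type*} [AddCommGroup G] [Fintype G]
    (N : ℕ) (hN : N = Fintype.card G)
    (d : ℕ) (hd : 0 < d) (hdN : d ∣ N)
    (H : AddSubgroup G) (hH : Nat.card H = d)
    (x : G) (hx : AddSubgroup.zmultiples (QuotientAddGroup.mk x : G ⧸ H) = ⊤)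
    (r : ℕ) (hr1 : 1 ≤ r) (hrN : r ≤ N)
    (A : Set G) (hA : A = ⋃ i ∈ Finset.range (r ⌈/⌉ d), ((H : Set G) + {(i • x : G)})) :
    (A.ncard = d * (r ⌈/⌉ d) ∧ r ≤ d * (r ⌈/⌉ d)) ∧
    (A - A = ⋃ i ∈ Finset.Icc (1 - ((r ⌈/⌉ d : ℕ) : ℤ)) (((r ⌈/⌉ d : ℕ) : ℤ) - 1),
      ((H : Set G) + {(i • x : G)})) ∧
    (A - A).ncard ≤ d * (2 * (r ⌈/⌉ d) - 1) := by
  classical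
  set k := r ⌈/⌉ d with hk
  set q := Nat.card (G ⧸ H) with hqdef
  set C : ℤ → Set G := fun n => (H : Set G) + {(n • x : G)} with hC
  -- basic numerics
  have hrk : r ≤ d * k := by simpa [smul_eq_mul] using le_smul_ceilDiv (b := r) hd
  have hk1 : 1 ≤ k := by
    rcases Nat.eq_zero_or_pos k with h | h
    · rw [h, mul_zero] at hrk; omega
    · exact h
  have hqd : q * d = N := by
    rw [hqdef, ← hH, hN, ← Nat.card_eq_fintype_card]
    exact (AddSubgroup.card_eq_card_quotient_mul_card_addSubgroup H).symm
  have hkq : k ≤ q := by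
    have h1 : k ≤ N / d := by
      rw [hk, ceilDiv_le_iff_le_mul hd, Nat.mul_div_cancel' hdN]; exact hrN
    rwa [← hqd, Nat.mul_div_cancel _ hd] at h1
  have hq : addOrderOf (QuotientAddGroup.mk x : G ⧸ H) = q := by
    rw [← Nat.card_zmultiples, hx, AddSubgroup.card_top]
  -- coset membership
  have memC : ∀ (n : ℤ) (y : G), y ∈ C n ↔ y - n • x ∈ H := by
    intro n y
    simp [hC, Set.add_singleton, sub_eq_iff_eq_add, eq_comm, sub_eq_add_neg]
  -- coset cardinality
  have hCcard : ∀ n : ℤ, (C n).ncard = d := by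
    intro n
    have him : C n = (fun y => y + n • x) '' (H : Set G) := by
      ext y; simp [hC, Set.add_singleton]
    rw [him, Set.ncard_image_of_injective _ (add_left_injective _), ← hH]
    exact (Nat.card_coe_set_eq _).symm
  -- divisibility criterion for shared cosets
  have hmemH : ∀ n : ℤ, (n • x ∈ H) ↔ (q : ℤ) ∣ n := by
    intro n
    rw [← QuotientAddGroup.eq_zero_iff,
      show ((QuotientAddGroup.mk (n • x) : G ⧸ H)) = n • (QuotientAddGroup.mk x : G ⧸ H) from rfl,
      ← hq]
    exact addOrderOf_dvd_iff_zsmul_eq_zero.symm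
  have hdisj : ∀ m n : ℤ, ¬ (q : ℤ) ∣ (m - n) → Disjoint (C m) (C n) := by
    intro m n h
    rw [Set.disjoint_left]
    intro y hm hn
    apply h
    have h1 := (memC m y).1 hm
    have h2 := (memC n y).1 hn
    have h3 : (m - n) • x ∈ H := by
      have := H.sub_mem h2 h1
      have he : (y - n • x) - (y - m • x) = (m - n) • x := by rw [sub_smul]; abel
      rwa [he] at this
    exact (hmemH _).1 h3
  have hdisj' : ∀ i ∈ Finset.range k, ∀ j ∈ Finset.range k, i ≠ j →
      Disjoint (C (i : ℤ)) (C (j : ℤ)) := by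
    intro i hi j hj hij
    rw [Finset.mem_range] at hi hj
    apply hdisj
    intro habs
    have h0 : (i : ℤ) - j = 0 :=
      Int.eq_zero_of_dvd_of_natAbs_lt_natAbs habs (by omega)
    omega
  -- difference of cosets
  have hsubC : ∀ (m n : ℤ) (a b : G), a ∈ C m → b ∈ C n → a - b ∈ C (m - n) := by
    intro m n a b ha hb
    rw [memC] at ha hb ⊢
    have he : (a - b) - (m - n) • x = (a - m • x) - (b - n • x) := by rw [sub_smul]; abel
    rw [he]; exact H.sub_mem ha hb
  -- A as union of cosets
  have hA' : A = ⋃ i ∈ Finset.range k, C (i : ℤ) := by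
    rw [hA]
    refine Set.iUnion₂_congr fun i _ => ?_
    simp [hC, natCast_zsmul]
  -- part 1 : cardinality of A
  have card_A : A.ncard = d * k := by
    rw [hA', ncard_biUnion_eq _ _ hdisj']
    simp [hCcard, Finset.sum_const, mul_comm]
  -- part 2 : A - A
  have hAA : A - A = ⋃ i ∈ Finset.Icc (1 - (k : ℤ)) ((k : ℤ) - 1), C i := by
    rw [hA']
    ext y
    simp only [Set.mem_sub, Set.mem_iUnion, Finset.mem_range, Finset.mem_Icc, exists_prop]
    constructor
    · rintro ⟨a, ha, b, hb, rfl⟩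
      obtain ⟨i, hi, hai⟩ := ha
      obtain ⟨j, hj, hbj⟩ := hb
      exact ⟨(i : ℤ) - j, ⟨by omega, by omega⟩, hsubC _ _ _ _ hai hbj⟩
    · rintro ⟨m, ⟨hm1, hm2⟩, hym⟩
      rcases le_or_gt 0 m with hm | hm
      · refine ⟨y, ⟨m.toNat, by omega, by rwa [Int.toNat_of_nonneg hm]⟩,
          0, ⟨0, by omega, ?_⟩, by abel⟩
        · rw [memC]; simpa using H.zero_mem
      · refine ⟨0, ⟨0, by omega, by rw [memC]; simpa using H.zero_mem⟩,
          -y, ⟨(-m).toNat, by omega, ?_⟩, by abel⟩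
        rw [Int.toNat_of_nonneg (by omega), memC]
        rw [memC] at hym
        have he : -y - (-m) • x = -(y - m • x) := by rw [neg_smul]; abel
        rw [he]
        exact H.neg_mem hym
  -- part 3 : upper bound
  have card_AA : (A - A).ncard ≤ d * (2 * k - 1) := by
    rw [hAA]
    refine le_trans (ncard_biUnion_le _ _) ?_
    have : ∑ i ∈ Finset.Icc (1 - (k : ℤ)) ((k : ℤ) - 1), (C i).ncard
        = (Finset.Icc (1 - (k : ℤ)) ((k : ℤ) - 1)).card * d := by
      simp [hCcard, Finset.sum_const, mul_comm]
    rw [this, Int.card_Icc]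
    have : ((k : ℤ) - 1 + 1 - (1 - k)).toNat = 2 * k - 1 := by omega
    rw [this, mul_comm]
  exact ⟨⟨card_A, hrk⟩, hAA, card_AA⟩
end

section
/- Let p be a prime and d ≥ 0 an integer. Order ℤ/pℤ by identifying it with {0, 1, …, p−1}, and order (ℤ/pℤ)^d by the induced lexicographic order. Let t and r be integers with 0 ≤ t, p^t < r ≤ p^{t+1}, and r ≤ p^d, and let A be the set of the r smallest elements of (ℤ/pℤ)^d in the lexicographic order. Then |A − A| = p^t · min{2·⌈r/p^t⌉ − 1, p}. -/
open Finset

-- geometric sum helper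
lemma geomsum (p n : ℕ) (hp : 1 ≤ p) : (p-1) * ∑ j ∈ range n, p^j = p^n - 1 := by
  induction n with
  | zero => simp
  | succ n ih =>
    rw [sum_range_succ, Nat.mul_add, ih]
    obtain ⟨q, rfl⟩ := Nat.exists_eq_add_of_le hp
    have h1 : 1 ≤ (1+q)^n := Nat.one_le_pow _ _ (by omega)
    have : (1+q)^(n+1) = (1+q)^n + q*(1+q)^n := by ring
    rw [this]
    have : (1+q-1) * (1+q)^n = q * (1+q)^n := by congr 1; omega
    rw [this]; omega

section Main
variable {p d : ℕ} [Fact p.Prime]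

def digit (x : Fin d → ZMod p) (j : ℕ) : ℕ := if h : j < d then (x ⟨j,h⟩).val else 0

lemma digit_le (x : Fin d → ZMod p) (j : ℕ) : digit x j ≤ p - 1 := by
  have hp : 0 < p := (Fact.out : p.Prime).pos
  unfold digit
  split
  · have := ZMod.val_lt (x ⟨j, by assumption⟩); omega
  · omega

def Nval (x : Fin d → ZMod p) : ℕ := ∑ j ∈ range d, digit x j * p^(d-1-j)

lemma tail_bound (x : Fin d → ZMod p) (i : ℕ) (hi : i ≤ d) :
    ∑ j ∈ Ico i d, digit x j * p^(d-1-j) < p^(d-i) := by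
  have hp : 1 ≤ p := (Fact.out : p.Prime).one_lt.le
  have h1 : ∑ j ∈ Ico i d, digit x j * p^(d-1-j) ≤ ∑ j ∈ Ico i d, (p-1) * p^(d-1-j) :=
    Finset.sum_le_sum fun j _ => Nat.mul_le_mul_right _ (digit_le x j)
  have h2 : ∑ j ∈ Ico i d, (p-1) * p^(d-1-j) = ∑ l ∈ range (d-i), (p-1) * p^((d-i)-1-l) := by
    rw [Finset.sum_Ico_eq_sum_range]
    apply Finset.sum_congr rfl
    intro l hl
    congr 2
    omega
  have h3 : ∑ l ∈ range (d-i), (p-1) * p^((d-i)-1-l) = ∑ l ∈ range (d-i), (p-1) * p^l :=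
    Finset.sum_range_reflect (fun l => (p-1) * p^l) (d-i)
  have h4 : ∑ l ∈ range (d-i), (p-1) * p^l = p^(d-i) - 1 := by
    rw [← Finset.mul_sum]; exact geomsum p (d-i) hp
  have h5 : 1 ≤ p^(d-i) := Nat.one_le_pow _ _ (by omega)
  omega

lemma Nval_lt (x : Fin d → ZMod p) : Nval x < p^d := by
  have h := tail_bound x 0 (Nat.zero_le d)
  rw [Nval, Finset.range_eq_Ico]
  simpa using h

end Main

lemma split_at (f : ℕ → ℕ) (i d : ℕ) (h : i < d) :
    ∑ j ∈ range d, f j = (∑ j ∈ range i, f j) + (f i + ∑ j ∈ Ico (i+1) d, f j) := by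
  rw [range_eq_Ico, ← Finset.sum_Ico_consecutive f (Nat.zero_le i) h.le,
    Finset.sum_eq_sum_Ico_succ_bot h f, ← range_eq_Ico]

section Main2
variable {p d : ℕ} [Fact p.Prime]

lemma digit_eq (x : Fin d → ZMod p) (i : Fin d) : digit x (i : ℕ) = (x i).val := by
  simp [digit, i.isLt]

lemma Nval_lt_of_lex {a b : Fin d → ZMod p} (i : Fin d)
    (hj : ∀ j : Fin d, j < i → a j = b j) (hi : (a i).val < (b i).val) :
    Nval a < Nval b := by
  have hsa := split_at (fun j => digit a j * p^(d-1-j)) i d i.isLt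
  have hsb := split_at (fun j => digit b j * p^(d-1-j)) i d i.isLt
  beta_reduce at hsa hsb
  have hhead : ∑ j ∈ range (i:ℕ), digit a j * p^(d-1-j)
      = ∑ j ∈ range (i:ℕ), digit b j * p^(d-1-j) := by
    apply Finset.sum_congr rfl
    intro j hj'
    simp only [Finset.mem_range] at hj'
    have : digit a j = digit b j := by
      unfold digit
      split
      · rw [hj ⟨j, by assumption⟩ (by exact hj')]
      · rfl
    rw [this]
  have hta := tail_bound a ((i:ℕ)+1) i.isLt
  have htb : (0:ℕ) ≤ ∑ j ∈ Ico ((i:ℕ)+1) d, digit b j * p^(d-1-j) := Nat.zero_le _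
  have hda : digit a (i:ℕ) = (a i).val := digit_eq a i
  have hdb : digit b (i:ℕ) = (b i).val := digit_eq b i
  have hpow : p^(d-((i:ℕ)+1)) = p^(d-1-(i:ℕ)) := by congr 1; omega
  rw [hpow] at hta
  have key : digit a (i:ℕ) * p^(d-1-(i:ℕ)) + ∑ j ∈ Ico ((i:ℕ)+1) d, digit a j * p^(d-1-j)
      < digit b (i:ℕ) * p^(d-1-(i:ℕ)) + ∑ j ∈ Ico ((i:ℕ)+1) d, digit b j * p^(d-1-j) := by
    have : (digit a (i:ℕ) + 1) * p^(d-1-(i:ℕ)) ≤ digit b (i:ℕ) * p^(d-1-(i:ℕ)) := by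
      apply Nat.mul_le_mul_right; omega
    nlinarith [Nat.zero_le (∑ j ∈ Ico ((i:ℕ)+1) d, digit b j * p^(d-1-j))]
  unfold Nval
  rw [hsa, hsb, hhead]
  omega

lemma lex_trichotomy {a b : Fin d → ZMod p} (hne : a ≠ b) :
    (∃ i : Fin d, (∀ j : Fin d, j < i → a j = b j) ∧ (a i).val < (b i).val) ∨
    (∃ i : Fin d, (∀ j : Fin d, j < i → b j = a j) ∧ (b i).val < (a i).val) := by
  have hex : ∃ i : Fin d, a i ≠ b i := by
    by_contra h
    push_neg at h
    exact hne (funext h)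
  classical
  let s := Finset.univ.filter (fun i : Fin d => a i ≠ b i)
  have hs : s.Nonempty := ⟨hex.choose, by simp [s, hex.choose_spec]⟩
  let i := s.min' hs
  have hi : a i ≠ b i := by
    have := s.min'_mem hs
    simpa [s] using this
  have hjlt : ∀ j : Fin d, j < i → a j = b j := by
    intro j hji
    by_contra hj
    have : i ≤ j := s.min'_le j (by simp [s, hj])
    exact absurd hji (not_lt.mpr this)
  have hval : (a i).val ≠ (b i).val := fun h => hi (ZMod.val_injective p h)
  rcases lt_or_gt_of_ne hval with h | h
  · exact Or.inl ⟨i, hjlt, h⟩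
  · exact Or.inr ⟨i, fun j hj => (hjlt j hj).symm, h⟩

lemma Nval_injective : Function.Injective (Nval (p := p) (d := d)) := by
  intro a b hab
  by_contra hne
  rcases lex_trichotomy hne with ⟨i, hj, hi⟩ | ⟨i, hj, hi⟩
  · exact absurd hab (Nat.ne_of_lt (Nval_lt_of_lex i hj hi))
  · exact absurd hab.symm (Nat.ne_of_lt (Nval_lt_of_lex i hj hi))

end Main2

section Main3
variable {p d : ℕ} [Fact p.Prime]

lemma image_Nval_univ : (Finset.univ.image (Nval (p := p) (d := d))) = range (p^d) := by
  apply Finset.eq_of_subset_of_card_le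
  · intro k hk
    simp only [Finset.mem_image] at hk
    obtain ⟨x, _, rfl⟩ := hk
    simpa using Nval_lt x
  · rw [Finset.card_range, Finset.card_image_of_injective _ Nval_injective]
    simp [ZMod.card]

lemma A_char {r : ℕ} (hr3 : r ≤ p ^ d) (A : Finset (Fin d → ZMod p)) (hcard : A.card = r)
    (hA : ∀ a ∈ A, ∀ b ∉ A,
      ∃ i : Fin d, (∀ j : Fin d, j < i → a j = b j) ∧ (a i).val < (b i).val) :
    A = Finset.univ.filter (fun x => Nval x < r) := by
  classical
  set B := Finset.univ.filter (fun x => Nval (p := p) x < r) with hB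
  have hBim : B.image Nval = range r := by
    apply Finset.Subset.antisymm
    · intro k hk
      simp only [Finset.mem_image, hB, Finset.mem_filter] at hk
      obtain ⟨x, ⟨_, hx⟩, rfl⟩ := hk
      simpa using hx
    · intro k hk
      simp only [Finset.mem_range] at hk
      have : k ∈ range (p^d) := by simp; omega
      rw [← image_Nval_univ] at this
      simp only [Finset.mem_image] at this
      obtain ⟨x, _, rfl⟩ := this
      simp only [Finset.mem_image, hB, Finset.mem_filter]
      exact ⟨x, ⟨Finset.mem_univ x, hk⟩, rfl⟩
  have hBcard : B.card = r := by
    rw [← Finset.card_range r, ← hBim, Finset.card_image_of_injective _ Nval_injective]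
  have hsub : A ⊆ B := by
    by_contra hns
    obtain ⟨a, ha, haB⟩ := Finset.not_subset.mp hns
    have hr1' : 1 ≤ r := hcard ▸ Finset.card_pos.mpr ⟨a, ha⟩
    have har : r ≤ Nval a := by
      by_contra h
      exact haB (Finset.mem_filter.mpr ⟨Finset.mem_univ a, Nat.lt_of_not_le h⟩)
    have : ∃ b ∈ B, b ∉ A := by
      by_contra h
      push_neg at h
      have : B ⊆ A.erase a := fun b hb => Finset.mem_erase.mpr
        ⟨fun he => haB (he ▸ hb), h b hb⟩
      have := Finset.card_le_card this
      rw [hBcard, Finset.card_erase_of_mem ha, hcard] at this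
      omega
    obtain ⟨b, hb, hbA⟩ := this
    obtain ⟨i, hj, hi⟩ := hA a ha b hbA
    have h1 : Nval a < Nval b := Nval_lt_of_lex i hj hi
    have h2 : Nval b < r := by
      simp only [hB, Finset.mem_filter] at hb
      exact hb.2
    omega
  exact Finset.eq_of_subset_of_card_le hsub (by omega)

end Main3

section Main4
variable {p d t : ℕ} [Fact p.Prime]

def build (p : ℕ) (d t : ℕ) (c : ZMod p) (v : Fin d → ZMod p) : Fin d → ZMod p :=
  fun j => if (j:ℕ) < d-1-t then 0 else if (j:ℕ) = d-1-t then c else v j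

lemma Nval_build (ht : t < d) (c : ZMod p) (v : Fin d → ZMod p) :
    Nval (build p d t c v) = c.val * p^t + ∑ j ∈ Ico (d-t) d, digit v j * p^(d-1-j) := by
  have hlt : d-1-t < d := by omega
  have hs := split_at (fun j => digit (build p d t c v) j * p^(d-1-j)) (d-1-t) d hlt
  beta_reduce at hs
  rw [Nval, hs]
  have h1 : ∑ j ∈ range (d-1-t), digit (build p d t c v) j * p^(d-1-j) = 0 := by
    apply Finset.sum_eq_zero
    intro j hj
    simp only [Finset.mem_range] at hj
    have : digit (build p d t c v) j = 0 := by
      unfold digit build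
      split
      · simp [hj]
      · rfl
    simp [this]
  have h2 : digit (build p d t c v) (d-1-t) = c.val := by
    unfold digit build
    rw [dif_pos hlt]
    simp
  have h3 : d-1-(d-1-t) = t := by omega
  have h4 : d-1-t+1 = d-t := by omega
  have h5 : ∑ j ∈ Ico (d-t) d, digit (build p d t c v) j * p^(d-1-j)
      = ∑ j ∈ Ico (d-t) d, digit v j * p^(d-1-j) := by
    apply Finset.sum_congr rfl
    intro j hj
    simp only [Finset.mem_Ico] at hj
    have : digit (build p d t c v) j = digit v j := by
      unfold digit build
      simp only [Fin.val_mk]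
      split
      · rw [if_neg (by omega), if_neg (by omega)]
      · rfl
    rw [this]
  rw [h1, h2, h3, h4, h5]
  omega

lemma build_sub (c c' : ZMod p) (v v' : Fin d → ZMod p) :
    build p d t c v - build p d t c' v' = build p d t (c - c') (v - v') := by
  funext j
  simp only [Pi.sub_apply, build]
  split_ifs <;> simp

end Main4

section Main5
variable {p d t r m : ℕ} [Fact p.Prime]

lemma digit_zero (j : ℕ) : digit (0 : Fin d → ZMod p) j = 0 := by
  unfold digit
  split
  · exact ZMod.val_zero
  · rfl

lemma Nval_build_zero (ht : t < d) (c : ZMod p) :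
    Nval (build p d t c 0) = c.val * p^t := by
  rw [Nval_build ht]
  rw [Finset.sum_eq_zero (fun j _ => by rw [digit_zero, Nat.zero_mul]), Nat.add_zero]

lemma Nval_build_lt_full (ht : t < d) (hmr' : (m-1) * p^t < r) {c : ZMod p}
    (hc : c.val + 2 ≤ m) (v : Fin d → ZMod p) : Nval (build p d t c v) < r := by
  rw [Nval_build ht]
  have htail : ∑ j ∈ Ico (d-t) d, digit v j * p^(d-1-j) < p^t := by
    have h := tail_bound v (d-t) (by omega)
    rwa [show d-(d-t) = t by omega] at h
  have h1 : (c.val + 1) * p^t ≤ (m-1) * p^t := Nat.mul_le_mul_right _ (by omega)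
  have h0 : (c.val+1)*p^t = c.val*p^t + p^t := by ring
  omega

lemma Nval_build_lt_zero (ht : t < d) (hmr' : (m-1) * p^t < r) {c : ZMod p}
    (hc : c.val + 1 ≤ m) : Nval (build p d t c 0) < r := by
  rw [Nval_build_zero ht]
  have h1 : c.val * p^t ≤ (m-1) * p^t := Nat.mul_le_mul_right _ (by omega)
  omega

lemma mem_head_zero (ht : t < d) (hr2 : r ≤ p^(t+1)) {x : Fin d → ZMod p}
    (hx : Nval x < r) (j : Fin d) (hj : (j:ℕ) < d-1-t) : x j = 0 := by
  by_contra hne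
  have hd : 1 ≤ digit x (j:ℕ) := by
    rw [digit_eq]
    rcases Nat.eq_zero_or_pos (x j).val with h | h
    · exact absurd ((ZMod.val_eq_zero _).mp h) hne
    · omega
  have hterm : digit x (j:ℕ) * p^(d-1-(j:ℕ)) ≤ Nval x :=
    Finset.single_le_sum (f := fun i => digit x i * p^(d-1-i))
      (fun i _ => Nat.zero_le _) (Finset.mem_range.mpr j.isLt)
  have hple : p^(t+1) ≤ p^(d-1-(j:ℕ)) :=
    Nat.pow_le_pow_right (Fact.out : p.Prime).pos (by omega)
  have : p^(t+1) ≤ digit x (j:ℕ) * p^(d-1-(j:ℕ)) := by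
    calc p^(t+1) = 1 * p^(t+1) := (Nat.one_mul _).symm
    _ ≤ digit x (j:ℕ) * p^(d-1-(j:ℕ)) := Nat.mul_le_mul hd hple
  omega

lemma mem_key_lt (ht : t < d) (hmr : r ≤ m * p^t) {x : Fin d → ZMod p}
    (hx : Nval x < r) : (x ⟨d-1-t, by omega⟩).val < m := by
  by_contra hge
  push_neg at hge
  have hterm : digit x (d-1-t) * p^(d-1-(d-1-t)) ≤ Nval x :=
    Finset.single_le_sum (f := fun i => digit x i * p^(d-1-i))
      (fun i _ => Nat.zero_le _) (Finset.mem_range.mpr (by omega))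
  have hd : digit x (d-1-t) = (x ⟨d-1-t, by omega⟩).val := digit_eq x ⟨d-1-t, by omega⟩
  have hp2 : d-1-(d-1-t) = t := by omega
  rw [hd, hp2] at hterm
  have : m * p^t ≤ (x ⟨d-1-t, by omega⟩).val * p^t := Nat.mul_le_mul_right _ hge
  omega

end Main5

lemma Dcard {p m : ℕ} [Fact p.Prime] (hm2 : 2 ≤ m) (hmp : m ≤ p) :
    (Finset.univ.filter (fun c : ZMod p => c.val < m ∨ p - c.val < m)).card
      = min (2*m-1) p := by
  have hp : 0 < p := (Fact.out : p.Prime).pos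
  have him : (Finset.univ.filter (fun c : ZMod p => c.val < m ∨ p - c.val < m)).image ZMod.val
      = (range p).filter (fun v => v < m ∨ p - v < m) := by
    ext v
    simp only [Finset.mem_image, Finset.mem_filter, Finset.mem_univ, true_and, Finset.mem_range]
    constructor
    · rintro ⟨c, hc, rfl⟩
      exact ⟨ZMod.val_lt c, hc⟩
    · rintro ⟨hv, hQ⟩
      refine ⟨(v : ZMod p), ?_, ZMod.val_cast_of_lt hv⟩
      rwa [ZMod.val_cast_of_lt hv]
  have hcard : (Finset.univ.filter (fun c : ZMod p => c.val < m ∨ p - c.val < m)).card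
      = ((range p).filter (fun v => v < m ∨ p - v < m)).card := by
    rw [← him, Finset.card_image_of_injective _ (ZMod.val_injective p)]
  rw [hcard]
  rcases le_or_gt (2*m) p with h2m | h2m
  · -- 2m ≤ p : count is 2m-1
    have hset : (range p).filter (fun v => v < m ∨ p - v < m)
        = range m ∪ Ico (p-m+1) p := by
      ext v
      simp only [Finset.mem_filter, Finset.mem_range, Finset.mem_union, Finset.mem_Ico]
      omega
    rw [hset, Finset.card_union_of_disjoint (by
      rw [Finset.disjoint_left]
      intro v hv hv'
      simp only [Finset.mem_range] at hv
      simp only [Finset.mem_Ico] at hv'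
      omega)]
    rw [Finset.card_range, Nat.card_Ico]
    omega
  · -- p < 2m : everything
    have hset : (range p).filter (fun v => v < m ∨ p - v < m) = range p := by
      apply Finset.filter_true_of_mem
      intro v hv
      simp only [Finset.mem_range] at hv
      omega
    rw [hset, Finset.card_range]
    omega

lemma split_at_prod (f : ℕ → ℕ) (i d : ℕ) (h : i < d) :
    ∏ j ∈ range d, f j = (∏ j ∈ range i, f j) * (f i * ∏ j ∈ Ico (i+1) d, f j) := by
  rw [range_eq_Ico, ← Finset.prod_Ico_consecutive f (Nat.zero_le i) h.le,
    Finset.prod_eq_prod_Ico_succ_bot h f, ← range_eq_Ico]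

lemma Scard {p d t m : ℕ} [Fact p.Prime] (ht : t < d) (hm2 : 2 ≤ m) (hmp : m ≤ p) :
    (Finset.univ.filter (fun x : Fin d → ZMod p =>
       (∀ j : Fin d, (j:ℕ) < d-1-t → x j = 0) ∧
       ((x ⟨d-1-t, by omega⟩).val < m ∨ p - (x ⟨d-1-t, by omega⟩).val < m))).card
    = p^t * min (2*m-1) p := by
  classical
  set D := Finset.univ.filter (fun c : ZMod p => c.val < m ∨ p - c.val < m) with hD
  have hpi : Finset.univ.filter (fun x : Fin d → ZMod p =>
       (∀ j : Fin d, (j:ℕ) < d-1-t → x j = 0) ∧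
       ((x ⟨d-1-t, by omega⟩).val < m ∨ p - (x ⟨d-1-t, by omega⟩).val < m))
      = Fintype.piFinset (fun j : Fin d =>
          if (j:ℕ) < d-1-t then ({0} : Finset (ZMod p))
          else if (j:ℕ) = d-1-t then D else Finset.univ) := by
    ext x
    simp only [Finset.mem_filter, Finset.mem_univ, true_and, Fintype.mem_piFinset]
    constructor
    · rintro ⟨h1, h2⟩ j
      split_ifs with hj1 hj2
      · simp [h1 j hj1]
      · have hje : j = ⟨d-1-t, by omega⟩ := Fin.ext hj2
        rw [hje, hD]
        exact Finset.mem_filter.mpr ⟨Finset.mem_univ _, h2⟩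
      · exact Finset.mem_univ _
    · intro h
      constructor
      · intro j hj
        have := h j
        rw [if_pos hj] at this
        simpa using this
      · have := h ⟨d-1-t, by omega⟩
        rw [if_neg (by simp), if_pos (by simp)] at this
        rw [hD] at this
        exact (Finset.mem_filter.mp this).2
  rw [hpi, Fintype.card_piFinset]
  have hconv : ∏ j : Fin d, (if (j:ℕ) < d-1-t then ({0} : Finset (ZMod p))
      else if (j:ℕ) = d-1-t then D else Finset.univ).card
      = ∏ n ∈ range d, (if n < d-1-t then ({0} : Finset (ZMod p))
      else if n = d-1-t then D else Finset.univ).card :=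
    Fin.prod_univ_eq_prod_range (fun n => (if n < d-1-t then ({0} : Finset (ZMod p))
      else if n = d-1-t then D else Finset.univ).card) d
  rw [hconv, split_at_prod _ (d-1-t) d (by omega)]
  have h1 : ∏ j ∈ range (d-1-t), (if j < d-1-t then ({0} : Finset (ZMod p))
      else if j = d-1-t then D else Finset.univ).card = 1 := by
    apply Finset.prod_eq_one
    intro j hj
    simp only [Finset.mem_range] at hj
    rw [if_pos hj, Finset.card_singleton]
  have h2 : (if d-1-t < d-1-t then ({0} : Finset (ZMod p))
      else if d-1-t = d-1-t then D else Finset.univ).card = D.card := by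
    rw [if_neg (lt_irrefl _), if_pos rfl]
  have h3 : ∏ j ∈ Ico (d-1-t+1) d, (if j < d-1-t then ({0} : Finset (ZMod p))
      else if j = d-1-t then D else Finset.univ).card = p^t := by
    have : ∀ j ∈ Ico (d-1-t+1) d, (if j < d-1-t then ({0} : Finset (ZMod p))
        else if j = d-1-t then D else Finset.univ).card = p := by
      intro j hj
      simp only [Finset.mem_Ico] at hj
      rw [if_neg (by omega), if_neg (by omega), Finset.card_univ]
      simp [ZMod.card]
    rw [Finset.prod_congr rfl this, Finset.prod_const, Nat.card_Ico]
    congr 1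
    omega
  rw [h1, h2, h3, Dcard hm2 hmp, one_mul, Nat.mul_comm]


open Pointwise

set_option maxHeartbeats 1000000 in
/-- Remark: let `p` be prime, `d ≥ 0`, and order `(ℤ/pℤ)^d` lexicographically via the
identification of `ℤ/pℤ` with `{0, 1, …, p-1}` (i.e. via `ZMod.val`). Let `0 ≤ t`,
`p^t < r ≤ p^(t+1)`, `r ≤ p^d`, and let `A` be the set of the `r` smallest elements of
`(ℤ/pℤ)^d` in the lexicographic order (i.e. `|A| = r` and every element of `A` strictly
precedes every non-element of `A` lexicographically). Then
`|A - A| = p^t · min {2⌈r/p^t⌉ - 1, p}`. -/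
theorem lex_initial_segment_diff_card (p : ℕ) [Fact p.Prime] (d t r : ℕ)
    (hr1 : p ^ t < r) (hr2 : r ≤ p ^ (t + 1)) (hr3 : r ≤ p ^ d)
    (A : Finset (Fin d → ZMod p)) (hcard : A.card = r)
    (hA : ∀ a ∈ A, ∀ b ∉ A,
      ∃ i : Fin d, (∀ j : Fin d, j < i → a j = b j) ∧ (a i).val < (b i).val) :
    (A - A).card = p ^ t * min (2 * (r ⌈/⌉ p ^ t) - 1) p := by
  classical
  have hp1 : 1 < p := (Fact.out : p.Prime).one_lt
  have ht : t < d := by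
    have h := lt_of_lt_of_le hr1 hr3
    exact (Nat.pow_lt_pow_iff_right hp1).mp h
  have hpt : 0 < p^t := Nat.pow_pos (by omega)
  set m := r ⌈/⌉ p^t with hm
  have hmr : r ≤ p^t * m := (ceilDiv_le_iff_le_mul hpt).mp le_rfl
  have hm2 : 2 ≤ m := by
    by_contra h
    push_neg at h
    have : r ≤ p^t * 1 := (ceilDiv_le_iff_le_mul hpt).mp (by omega)
    rw [Nat.mul_one] at this
    omega
  have hmp : m ≤ p := (ceilDiv_le_iff_le_mul hpt).mpr (by rw [← pow_succ]; exact hr2)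
  have hmr' : (m-1) * p^t < r := by
    by_contra h
    push_neg at h
    have : m ≤ m - 1 := (ceilDiv_le_iff_le_mul hpt).mpr (by rw [Nat.mul_comm]; exact h)
    omega
  have hAchar := A_char hr3 A hcard hA
  have hmr2 : r ≤ m * p^t := by rw [Nat.mul_comm]; exact hmr
  -- the build-equals-x lemma
  have hbx : ∀ x : Fin d → ZMod p, (∀ j : Fin d, (j:ℕ) < d-1-t → x j = 0) →
      build p d t (x ⟨d-1-t, by omega⟩) x = x := by
    intro x h1
    funext j
    unfold build
    split_ifs with hj1 hj2
    · exact (h1 j hj1).symm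
    · have : j = ⟨d-1-t, by omega⟩ := Fin.ext hj2
      rw [this]
    · rfl
  have hS : A - A = Finset.univ.filter (fun x : Fin d → ZMod p =>
       (∀ j : Fin d, (j:ℕ) < d-1-t → x j = 0) ∧
       ((x ⟨d-1-t, by omega⟩).val < m ∨ p - (x ⟨d-1-t, by omega⟩).val < m)) := by
    ext x
    rw [Finset.mem_sub]
    simp only [Finset.mem_filter, Finset.mem_univ, true_and]
    constructor
    · rintro ⟨a, ha, b, hb, rfl⟩
      rw [hAchar] at ha hb
      have hNa : Nval a < r := (Finset.mem_filter.mp ha).2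
      have hNb : Nval b < r := (Finset.mem_filter.mp hb).2
      constructor
      · intro j hj
        rw [Pi.sub_apply, mem_head_zero ht hr2 hNa j hj, mem_head_zero ht hr2 hNb j hj,
          sub_zero]
      · have hu : (a ⟨d-1-t, by omega⟩).val < m := mem_key_lt ht hmr2 hNa
        have hw : (b ⟨d-1-t, by omega⟩).val < m := mem_key_lt ht hmr2 hNb
        rw [Pi.sub_apply]
        rcases le_or_gt (b ⟨d-1-t, by omega⟩).val (a ⟨d-1-t, by omega⟩).val with h | h
        · left
          rw [ZMod.val_sub h]
          omega
        · right
          have hne : b ⟨d-1-t, by omega⟩ - a ⟨d-1-t, by omega⟩ ≠ 0 := by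
            intro h0
            rw [sub_eq_zero] at h0
            rw [h0] at h
            exact lt_irrefl _ h
          have heq : a ⟨d-1-t, by omega⟩ - b ⟨d-1-t, by omega⟩
              = -(b ⟨d-1-t, by omega⟩ - a ⟨d-1-t, by omega⟩) := by ring
          rw [heq, ZMod.neg_val, if_neg hne, ZMod.val_sub h.le]
          have := ZMod.val_lt (b ⟨d-1-t, by omega⟩)
          omega
    · rintro ⟨h1, h2⟩
      by_cases hc1 : (x ⟨d-1-t, by omega⟩).val < m
      · refine ⟨build p d t (x ⟨d-1-t, by omega⟩) 0, ?_, build p d t 0 (-x), ?_, ?_⟩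
        · rw [hAchar]
          exact Finset.mem_filter.mpr ⟨Finset.mem_univ _,
            Nval_build_lt_zero ht hmr' (by omega)⟩
        · rw [hAchar]
          refine Finset.mem_filter.mpr ⟨Finset.mem_univ _,
            Nval_build_lt_full ht hmr' ?_ (-x)⟩
          rw [ZMod.val_zero]
          omega
        · have e1 : x ⟨d-1-t, by omega⟩ - 0 = x ⟨d-1-t, by omega⟩ := sub_zero _
          have e2 : (0 : Fin d → ZMod p) - (-x) = x := by
            funext j; simp
          exact (build_sub _ _ _ _).trans
            ((congrArg₂ (build p d t) e1 e2).trans (hbx x h1))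
      · have hc2 : p - (x ⟨d-1-t, by omega⟩).val < m := h2.resolve_left hc1
        have hne : x ⟨d-1-t, by omega⟩ ≠ 0 := by
          intro h0
          rw [h0, ZMod.val_zero] at hc1
          omega
        refine ⟨build p d t 0 x, ?_, build p d t (-(x ⟨d-1-t, by omega⟩)) 0, ?_, ?_⟩
        · rw [hAchar]
          refine Finset.mem_filter.mpr ⟨Finset.mem_univ _,
            Nval_build_lt_full ht hmr' ?_ x⟩
          rw [ZMod.val_zero]
          omega
        · rw [hAchar]
          refine Finset.mem_filter.mpr ⟨Finset.mem_univ _,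
            Nval_build_lt_zero ht hmr' ?_⟩
          rw [ZMod.neg_val, if_neg hne]
          omega
        · have e1 : (0:ZMod p) - (-(x ⟨d-1-t, by omega⟩)) = x ⟨d-1-t, by omega⟩ := by ring
          have e2 : x - (0 : Fin d → ZMod p) = x := sub_zero x
          exact (build_sub _ _ _ _).trans
            ((congrArg₂ (build p d t) e1 e2).trans (hbx x h1))
  rw [hS, Scard ht hm2 hmp]
end

section
/- Let p be a prime, let d ≥ 1 be an integer, let G = 𝔽_p^d, and let A be a nonempty subset of G with |A − A| ≤ p^{d−1}. Then there exists a one-dimensional vector subspace ℓ of G such that ℓ ∩ (A − A) = {0}. -/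
open Pointwise

/-- Lemma: let `p` be prime, `d ≥ 1`, `G = 𝔽_p^d`, and `A ⊆ G` a nonempty subset with
`|A - A| ≤ p^(d-1)`. Then there is a one-dimensional vector subspace `ℓ` of `G` with
`ℓ ∩ (A - A) = {0}`. -/
theorem exists_line_inter_diff_eq_zero (p : ℕ) [Fact p.Prime] (d : ℕ) (hd : 1 ≤ d)
    (A : Set (Fin d → ZMod p)) (hA : A.Nonempty)
    (hcard : (A - A).ncard ≤ p ^ (d - 1)) :
    ∃ ℓ : Submodule (ZMod p) (Fin d → ZMod p),
      Module.finrank (ZMod p) ℓ = 1 ∧ (ℓ : Set (Fin d → ZMod p)) ∩ (A - A) = {0} := by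
  classical
  have hp : p.Prime := Fact.out
  obtain ⟨a, ha⟩ := hA
  have h0 : (0 : Fin d → ZMod p) ∈ A - A := by
    simpa using Set.sub_mem_sub ha ha
  set S : Set (Fin d → ZMod p) := (A - A) \ {0} with hS
  have hSfin : S.Finite := Set.toFinite _
  have hScard : S.ncard ≤ p ^ (d - 1) - 1 := by
    have h1 : S.ncard = (A - A).ncard - 1 :=
      Set.ncard_diff_singleton_of_mem h0
    omega
  set S' := hSfin.toFinset with hS'
  have hS'card : S'.card ≤ p ^ (d - 1) - 1 := by
    have : S'.card = S.ncard := (Set.ncard_eq_toFinset_card S hSfin).symm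
    omega
  set B' : Finset (Fin d → ZMod p) :=
    Finset.univ.biUnion (fun c : (ZMod p)ˣ => S'.image (fun s => (c : ZMod p) • s)) with hB'
  have hB'card : B'.card ≤ (p - 1) * S'.card := by
    calc B'.card ≤ ∑ c : (ZMod p)ˣ, (S'.image (fun s => (c : ZMod p) • s)).card :=
          Finset.card_biUnion_le
      _ ≤ ∑ _c : (ZMod p)ˣ, S'.card :=
          Finset.sum_le_sum fun _ _ => Finset.card_image_le
      _ = Fintype.card (ZMod p)ˣ * S'.card := by
          rw [Finset.sum_const, smul_eq_mul, Finset.card_univ]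
      _ = (p - 1) * S'.card := by rw [ZMod.card_units]
  have h2 : 2 ≤ p := hp.two_le
  have hq : 1 ≤ p ^ (d - 1) := Nat.one_le_pow _ _ hp.pos
  have hpow : p ^ d = p ^ (d - 1) * p := by
    conv_lhs => rw [← Nat.sub_add_cancel hd, pow_succ]
  have key : (p - 1) * (p ^ (d - 1) - 1) + 1 < p ^ d := by
    rw [hpow]
    obtain ⟨p', rfl⟩ : ∃ p', p = 2 + p' := ⟨p - 2, by omega⟩
    obtain ⟨q', hq'⟩ : ∃ q', (2 + p') ^ (d - 1) = 1 + q' := ⟨(2 + p') ^ (d - 1) - 1, by omega⟩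
    rw [hq']
    have hsub : 2 + p' - 1 = 1 + p' := by omega
    simp only [Nat.add_sub_cancel_left, Nat.add_sub_cancel, hsub]
    nlinarith
  have hlt : (insert (0 : Fin d → ZMod p) B').card < Fintype.card (Fin d → ZMod p) := by
    have hcardG : Fintype.card (Fin d → ZMod p) = p ^ d := by simp [ZMod.card]
    have h3 : (insert (0 : Fin d → ZMod p) B').card ≤ B'.card + 1 := Finset.card_insert_le _ _
    have h4 : B'.card ≤ (p - 1) * (p ^ (d - 1) - 1) :=
      le_trans hB'card (Nat.mul_le_mul_left _ hS'card)
    omega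
  obtain ⟨v, hv⟩ : ∃ v, v ∉ insert (0 : Fin d → ZMod p) B' := by
    by_contra h
    push_neg at h
    have hsub : (Finset.univ : Finset (Fin d → ZMod p)) ⊆ insert 0 B' := fun x _ => h x
    have := Finset.card_le_card hsub
    rw [Finset.card_univ] at this
    omega
  rw [Finset.mem_insert] at hv
  push_neg at hv
  obtain ⟨hv0, hvB⟩ := hv
  refine ⟨Submodule.span (ZMod p) {v}, finrank_span_singleton hv0, ?_⟩
  ext x
  simp only [Set.mem_inter_iff, SetLike.mem_coe, Submodule.mem_span_singleton,
    Set.mem_singleton_iff]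
  constructor
  · rintro ⟨⟨c, rfl⟩, hx⟩
    by_contra hne
    have hc : c ≠ 0 := by rintro rfl; simp at hne
    have hxS : c • v ∈ S := ⟨hx, by simpa using hne⟩
    have hmem : v ∈ B' := by
      rw [hB']
      apply Finset.mem_biUnion.2
      refine ⟨(Units.mk0 c hc)⁻¹, Finset.mem_univ _,
        Finset.mem_image.2 ⟨c • v, hSfin.mem_toFinset.2 hxS, ?_⟩⟩
      simp [smul_smul, inv_mul_cancel₀ hc]
    exact hvB hmem
  · rintro rfl
    exact ⟨⟨0, by simp⟩, h0⟩
end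

section
/- Let p be a prime, let d ≥ 3 be an integer, and let m be an integer with 1 ≤ m ≤ p. Let S be a subset of 𝔽_p^d with |S| < m·p^{d−1}. Then there exists a vector subspace V₀ of 𝔽_p^d of dimension d − 2 such that |S ∩ V₀| ≤ m·p^{d−3}. -/
open Finset


noncomputable def dotL (p k : ℕ) (u : Fin k → ZMod p) :
    (Fin k → ZMod p) →ₗ[ZMod p] ZMod p :=
  ∑ i, u i • LinearMap.proj i

lemma dotL_apply (p k : ℕ) (u y : Fin k → ZMod p) :
    dotL p k u y = ∑ i, u i * y i := by
  simp [dotL]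

lemma finrank_ker_dotL (p k : ℕ) [Fact p.Prime] (u : Fin k → ZMod p) (hu : u ≠ 0) :
    Module.finrank (ZMod p) (LinearMap.ker (dotL p k u)) = k - 1 := by
  have hne : dotL p k u ≠ 0 := by
    obtain ⟨j, hj⟩ := Function.ne_iff.mp hu
    intro h
    apply hj
    have := congrArg (fun f => f (Pi.single j 1)) (h : dotL p k u = 0)
    simpa [dotL_apply, Pi.single_apply, Finset.mul_sum, mul_ite] using this
  have hsurj : Function.Surjective (dotL p k u) := LinearMap.surjective_of_ne_zero hne
  have h1 := LinearMap.finrank_range_add_finrank_ker (dotL p k u)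
  rw [LinearMap.range_eq_top.mpr hsurj, finrank_top] at h1
  simp only [Module.finrank_self, Module.finrank_pi, Fintype.card_fin] at h1
  omega

lemma card_dot_zero (p k : ℕ) [Fact p.Prime] (x : Fin k → ZMod p) (hx : x ≠ 0) :
    (univ.filter fun u : Fin k → ZMod p => (∑ i, u i * x i) = 0).card = p ^ (k - 1) := by
  classical
  have h1 : (univ.filter fun u : Fin k → ZMod p => (∑ i, u i * x i) = 0).card
      = Nat.card {u : Fin k → ZMod p // (∑ i, u i * x i) = 0} := by
    rw [Nat.card_eq_fintype_card, Fintype.card_subtype]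
  have h2 : Nat.card {u : Fin k → ZMod p // (∑ i, u i * x i) = 0}
      = Nat.card (LinearMap.ker (dotL p k x)) := by
    refine Nat.card_congr (Equiv.subtypeEquivRight ?_)
    intro u
    simp [LinearMap.mem_ker, dotL_apply, mul_comm]
  haveI : Fintype (LinearMap.ker (dotL p k x)) := Fintype.ofFinite _
  rw [h1, h2, Nat.card_eq_fintype_card, Module.card_eq_pow_finrank (K := ZMod p), ZMod.card,
    finrank_ker_dotL p k x hx]

lemma key_lemma (p : ℕ) [Fact p.Prime] (k : ℕ) (n B : ℕ)
    (T : Set (Fin k → ZMod p)) (hB : (T \ {0}).ncard ≤ B)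
    (hnum : p ^ k - 1 + B * (p ^ (k - 1) - 1) < (p ^ k - 1) * (n + 1)) :
    ∃ V : Submodule (ZMod p) (Fin k → ZMod p),
      Module.finrank (ZMod p) V = k - 1 ∧ (T ∩ V).ncard ≤ n := by
  classical
  have hTfin : T.Finite := Set.toFinite T
  let Tf : Finset (Fin k → ZMod p) := hTfin.toFinset
  let U : Finset (Fin k → ZMod p) := univ.filter (fun u => u ≠ 0)
  have hmemU : ∀ u : Fin k → ZMod p, u ∈ U ↔ u ≠ 0 := by
    intro u; simp [U]
  have hmemTf : ∀ y : Fin k → ZMod p, y ∈ Tf ↔ y ∈ T := by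
    intro y; exact Set.Finite.mem_toFinset hTfin
  have hUcard : U.card = p ^ k - 1 := by
    have h0' : (0 : Fin k → ZMod p) ∉ U := by simp [hmemU]
    have h0 : insert 0 U = univ := by
      ext u; by_cases hu : u = 0 <;> simp [hmemU, hu]
    have h1 := Finset.card_insert_of_notMem h0'
    rw [h0] at h1
    have hcu : (univ : Finset (Fin k → ZMod p)).card = p ^ k := by
      rw [Finset.card_univ]
      simp [ZMod.card]
    omega
  have hcnt : ∀ y : Fin k → ZMod p, y ≠ 0 →
      (U.filter fun u => (∑ i, u i * y i) = 0).card = p ^ (k - 1) - 1 := by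
    intro y hy
    have h0' : (0 : Fin k → ZMod p) ∉ U.filter fun u => (∑ i, u i * y i) = 0 := by
      simp [hmemU]
    have hins : insert 0 (U.filter fun u => (∑ i, u i * y i) = 0)
        = univ.filter fun u : Fin k → ZMod p => (∑ i, u i * y i) = 0 := by
      ext u
      by_cases hu : u = 0
      · subst hu; simp
      · simp [Finset.mem_filter, hmemU, hu]
    have h1 := Finset.card_insert_of_notMem h0'
    rw [hins, card_dot_zero p k y hy] at h1
    clear hins h0'
    generalize (U.filter fun u => (∑ i, u i * y i) = 0).card = a at h1 ⊢
    omega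
  have hswap : ∑ u ∈ U, (Tf.filter fun y => (∑ i, u i * y i) = 0).card
      = ∑ y ∈ Tf, (U.filter fun u => (∑ i, u i * y i) = 0).card := by
    simp only [Finset.card_filter]
    rw [Finset.sum_comm]
  have hbound : ∑ y ∈ Tf, (U.filter fun u => (∑ i, u i * y i) = 0).card
      ≤ (p ^ k - 1) + B * (p ^ (k - 1) - 1) := by
    have hTsplit : ∑ y ∈ Tf, (U.filter fun u => (∑ i, u i * y i) = 0).card
        ≤ ∑ y ∈ Tf, (if y = 0 then p ^ k - 1 else p ^ (k - 1) - 1) := by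
      refine Finset.sum_le_sum ?_
      intro y _
      by_cases hy : y = 0
      · rw [if_pos hy]
        calc (U.filter fun u => (∑ i, u i * y i) = 0).card
            ≤ U.card := Finset.card_filter_le _ _
          _ = p ^ k - 1 := hUcard
      · rw [if_neg hy, hcnt y hy]
    refine hTsplit.trans ?_
    rw [Finset.sum_ite]
    have e1 : (Tf.filter (fun y => y = 0)).card ≤ 1 := by
      refine Finset.card_le_one.mpr ?_
      intro a ha b hb
      simp only [Finset.mem_filter] at ha hb
      rw [ha.2, hb.2]
    have e2 : (Tf.filter (fun y => ¬ y = 0)).card ≤ B := by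
      refine le_trans ?_ hB
      have h : ((T \ {0} : Set _)) = ↑(Tf.filter (fun y => ¬ y = 0)) := by
        ext y
        simp only [Set.mem_diff, Set.mem_singleton_iff, Finset.coe_filter,
          Set.mem_setOf_eq, hmemTf]
      rw [h, Set.ncard_coe_finset]
    simp only [Finset.sum_const, smul_eq_mul]
    nlinarith [Nat.mul_le_mul e1 (le_refl (p ^ k - 1)),
      Nat.mul_le_mul e2 (le_refl (p ^ (k-1) - 1))]
  have hex : ∃ u ∈ U, (Tf.filter fun y => (∑ i, u i * y i) = 0).card ≤ n := by
    by_contra h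
    push_neg at h
    have h2 : U.card • (n + 1) ≤ ∑ u ∈ U, (Tf.filter fun y => (∑ i, u i * y i) = 0).card :=
      Finset.card_nsmul_le_sum U _ _ (fun u hu => h u hu)
    rw [hswap, hUcard] at h2
    simp only [smul_eq_mul] at h2
    exact lt_irrefl _ (hnum.trans_le (h2.trans hbound))
  obtain ⟨u, hu, hcard⟩ := hex
  have hu0 : u ≠ 0 := (hmemU u).mp hu
  refine ⟨LinearMap.ker (dotL p k u), finrank_ker_dotL p k u hu0, ?_⟩
  have hset : T ∩ (LinearMap.ker (dotL p k u) : Set (Fin k → ZMod p))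
      = ↑(Tf.filter fun y => (∑ i, u i * y i) = 0) := by
    ext y
    simp only [Set.mem_inter_iff, SetLike.mem_coe, LinearMap.mem_ker, dotL_apply,
      Finset.coe_filter, Set.mem_setOf_eq, hmemTf]
  rw [hset, Set.ncard_coe_finset]
  exact hcard


lemma num1 (p d m : ℕ) (hp : 2 ≤ p) (hd : 3 ≤ d) (hm1 : 1 ≤ m) (hmp : m ≤ p) :
    p ^ d - 1 + (m * p ^ (d - 1) - 1) * (p ^ (d - 1) - 1)
      < (p ^ d - 1) * (m * p ^ (d - 2) + 1) := by
  have e3 : p ^ d = p ^ (d - 3) * p ^ 3 := by rw [← pow_add]; congr 1; omega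
  have e2 : p ^ (d - 1) = p ^ (d - 3) * p ^ 2 := by rw [← pow_add]; congr 1; omega
  have e1 : p ^ (d - 2) = p ^ (d - 3) * p := by
    rw [← pow_succ]; congr 1; omega
  rw [e1, e2, e3]
  have hq : 1 ≤ p ^ (d - 3) := Nat.one_le_pow _ _ (by omega)
  set q := p ^ (d - 3) with hqdef
  clear_value q
  clear e1 e2 e3 hqdef
  have hp3 : 0 < p ^ 3 := by positivity
  have hp2 : 0 < p ^ 2 := by positivity
  have h1 : 1 ≤ q * p ^ 3 := Nat.mul_pos hq hp3
  have h2 : 1 ≤ q * p ^ 2 := Nat.mul_pos hq hp2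
  have h3 : 1 ≤ m * (q * p ^ 2) := Nat.mul_pos hm1 h2
  zify [h1, h2, h3]
  have hp' : (2:ℤ) ≤ p := by exact_mod_cast hp
  have hm' : (1:ℤ) ≤ m := by exact_mod_cast hm1
  have hq' : (1:ℤ) ≤ q := by exact_mod_cast hq
  nlinarith [mul_nonneg (mul_nonneg (mul_nonneg (sub_nonneg.mpr hp')
      (by linarith : (0:ℤ) ≤ m)) (by linarith : (0:ℤ) ≤ q)) (by linarith : (0:ℤ) ≤ p),
    mul_le_mul (mul_le_mul hm' hq' (by norm_num) (by linarith)) hp' (by norm_num)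
      (by nlinarith),
    mul_nonneg (by linarith : (0:ℤ) ≤ q) (by nlinarith : (0:ℤ) ≤ (p:ℤ)^2)]

lemma num2 (p d m : ℕ) (hp : 2 ≤ p) (hd : 3 ≤ d) (hm1 : 1 ≤ m) :
    p ^ (d - 1) - 1 + m * p ^ (d - 2) * (p ^ (d - 2) - 1)
      < (p ^ (d - 1) - 1) * (m * p ^ (d - 3) + 1) := by
  have e2 : p ^ (d - 1) = p ^ (d - 3) * p ^ 2 := by rw [← pow_add]; congr 1; omega
  have e1 : p ^ (d - 2) = p ^ (d - 3) * p := by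
    rw [← pow_succ]; congr 1; omega
  rw [e1, e2]
  have hq : 1 ≤ p ^ (d - 3) := Nat.one_le_pow _ _ (by omega)
  set q := p ^ (d - 3) with hqdef
  clear_value q
  clear e1 e2 hqdef
  have hp2 : 0 < p ^ 2 := by positivity
  have h2 : 1 ≤ q * p ^ 2 := Nat.mul_pos hq hp2
  have h1 : 1 ≤ q * p := Nat.mul_pos hq (by omega)
  zify [h1, h2]
  have hp' : (2:ℤ) ≤ p := by exact_mod_cast hp
  have hm' : (1:ℤ) ≤ m := by exact_mod_cast hm1
  have hq' : (1:ℤ) ≤ q := by exact_mod_cast hq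
  nlinarith [mul_nonneg (mul_nonneg (sub_nonneg.mpr hp')
      (by linarith : (0:ℤ) ≤ m)) (by linarith : (0:ℤ) ≤ q),
    mul_le_mul hm' hq' (by norm_num) (by linarith)]

/-- Lemma: let `p` be prime, `d ≥ 3`, and `1 ≤ m ≤ p`. If `S ⊆ 𝔽_p^d` with `|S| < m p^(d-1)`,
then there is a vector subspace `V₀ ⊆ 𝔽_p^d` of dimension `d - 2` with
`|S ∩ V₀| ≤ m p^(d-3)`. -/
theorem exists_codim_two_subspace (p : ℕ) [Fact p.Prime] (d : ℕ) (hd : 3 ≤ d)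
    (m : ℕ) (hm1 : 1 ≤ m) (hmp : m ≤ p)
    (S : Set (Fin d → ZMod p)) (hS : S.ncard < m * p ^ (d - 1)) :
    ∃ V₀ : Submodule (ZMod p) (Fin d → ZMod p),
      Module.finrank (ZMod p) V₀ = d - 2 ∧ (S ∩ (V₀ : Set (Fin d → ZMod p))).ncard ≤ m * p ^ (d - 3) := by
  classical
  have hp2 : 2 ≤ p := (Fact.out : p.Prime).two_le
  have num1 := num1 p d m hp2 hd hm1 hmp
  have num2 := num2 p d m hp2 hd hm1
  -- Step 1: find a hyperplane H with small intersection
  obtain ⟨H, hHrank, hHcard⟩ := key_lemma p d (m * p ^ (d - 2)) (m * p ^ (d - 1) - 1) S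
    (by
      have h1 : (S \ {0}).ncard ≤ S.ncard := Set.ncard_le_ncard Set.diff_subset (Set.toFinite S)
      omega)
    num1
  -- Step 2: transport to `Fin (d-1) → ZMod p`
  have hfr : Module.finrank (ZMod p) H = Module.finrank (ZMod p) (Fin (d - 1) → ZMod p) := by
    rw [hHrank, Module.finrank_pi, Fintype.card_fin]
  let e : H ≃ₗ[ZMod p] (Fin (d - 1) → ZMod p) := LinearEquiv.ofFinrankEq _ _ hfr
  let ψ : (Fin (d - 1) → ZMod p) →ₗ[ZMod p] (Fin d → ZMod p) :=
    H.subtype.comp e.symm.toLinearMap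
  have hψcoe : ⇑ψ = (Subtype.val : H → (Fin d → ZMod p)) ∘ ⇑e.symm := rfl
  have hψ : Function.Injective ψ := by
    rw [hψcoe]
    exact Subtype.val_injective.comp e.symm.injective
  have hrange : Set.range ⇑ψ = (H : Set (Fin d → ZMod p)) := by
    rw [hψcoe, Set.range_comp, e.symm.surjective.range_eq, Set.image_univ, Subtype.range_coe]
  set T : Set (Fin (d - 1) → ZMod p) := ⇑ψ ⁻¹' S with hT
  have hTcard : T.ncard = (S ∩ (H : Set (Fin d → ZMod p))).ncard := by
    rw [← Set.ncard_image_of_injective T hψ, hT, Set.image_preimage_eq_inter_range, hrange]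
  obtain ⟨V', hV'rank, hV'card⟩ := key_lemma p (d - 1) (m * p ^ (d - 3)) (m * p ^ (d - 2)) T
    (by
      have h1 : (T \ {0}).ncard ≤ T.ncard := Set.ncard_le_ncard Set.diff_subset (Set.toFinite T)
      rw [hTcard] at h1
      exact h1.trans hHcard)
    (by
      have h : d - 1 - 1 = d - 2 := by omega
      rw [h]
      exact num2)
  refine ⟨Submodule.map ψ V', ?_, ?_⟩
  · rw [← LinearEquiv.finrank_eq (Submodule.equivMapOfInjective ψ hψ V'), hV'rank]
    omega
  · have hm : (Submodule.map ψ V' : Set (Fin d → ZMod p)) = ⇑ψ '' ↑V' := Submodule.map_coe ψ V'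
    rw [hm]
    have h2 : S ∩ ⇑ψ '' ↑V' = ⇑ψ '' (↑V' ∩ T) := by
      rw [hT, Set.image_inter_preimage, Set.inter_comm]
    rw [h2, Set.ncard_image_of_injective _ hψ, Set.inter_comm]
    exact hV'card
end
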